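/- arXiv:1704.01172 — 9 statements merged into one kernel-verified Lean document; each statement's English description precedes it below -/
import Mathlib

section
/- Let G be a finite simple graph and let w be an edge-injective edge-weighting of G with strictly positive integer weights. If uv is an edge of G with deg(u) = deg(v) = 2, then σ_w(u) ≠ σ_w(v). -/
open scoped Classical
open Finset

/-- The degree of a vertex `v` in a finite simple graph `G`. -/
noncomputable def degG {V : Type*} [Fintype V] (G : SimpleGraph V) (v : V) : ℕ :=
  (Finset.univ.filter (fun x => G.Adj v x)).card

/-- The sum `σ_w(v)` of the weights of the edges of `G` incident to `v`. -/
noncomputable def vSum {V : Type*} [Fintype V] (G : SimpleGraph V) (w : Sym2 V → ℕ) (v : V) : ℕ :=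
  ∑ x ∈ Finset.univ.filter (fun x => G.Adj v x), w s(v, x)

/-- An edge-weighting is edge-injective if distinct edges receive distinct weights. -/
def EdgeInjective {V : Type*} (G : SimpleGraph V) (w : Sym2 V → ℕ) : Prop :=
  ∀ e ∈ G.edgeSet, ∀ f ∈ G.edgeSet, w e = w f → e = f

/-- An edge-weighting is neighbour-sum-distinguishing if `σ_w(u) ≠ σ_w(v)` for every edge `uv`. -/
def NSD {V : Type*} [Fintype V] (G : SimpleGraph V) (w : Sym2 V → ℕ) : Prop :=
  ∀ u v, G.Adj u v → vSum G w u ≠ vSum G w v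

/-- A graph is nice if no edge has both of its endpoints of degree 1
(equivalently, no connected component is isomorphic to `K₂`). -/
def Nice {V : Type*} [Fintype V] (G : SimpleGraph V) : Prop :=
  ∀ u v, G.Adj u v → ¬ (degG G u = 1 ∧ degG G v = 1)

/-! Both sums contain `w(uv)`; what remains are the weights of the other edge at `u` and the
other edge at `v`, and these are different edges, since the other edge at `u` avoids `v`. -/

lemma exists_eq_pair_of_card_eq_two {α : Type*} [DecidableEq α] {s : Finset α} {v : α}
    (hs : s.card = 2) (hv : v ∈ s) : ∃ a, a ≠ v ∧ s = {v, a} := by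
  obtain ⟨a, ha⟩ := card_eq_one.mp (by rw [card_erase_of_mem hv, hs] : (s.erase v).card = 1)
  refine ⟨a, ?_, ?_⟩
  · simpa using (mem_erase.mp (ha ▸ mem_singleton_self a : a ∈ s.erase v)).1
  · rw [← ha, insert_erase hv]

lemma exists_adj_ne_vSum_eq_add {V : Type*} [Fintype V] (G : SimpleGraph V) (w : Sym2 V → ℕ)
    {u v : V} (huv : G.Adj u v) (hu : degG G u = 2) :
    ∃ a, G.Adj u a ∧ a ≠ v ∧ vSum G w u = w s(u, v) + w s(u, a) := by
  obtain ⟨a, hav, hN⟩ :=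
    exists_eq_pair_of_card_eq_two hu (by simpa using huv : v ∈ univ.filter (G.Adj u))
  have hua : G.Adj u a := by
    simpa using (hN ▸ mem_insert_of_mem (mem_singleton_self a) : a ∈ univ.filter (G.Adj u))
  refine ⟨a, hua, hav, ?_⟩
  rw [vSum, hN, sum_pair hav.symm]

theorem stmt_1_general {V : Type*} [Fintype V] (G : SimpleGraph V) (w : Sym2 V → ℕ)
    (hinj : EdgeInjective G w)
    (u v : V) (huv : G.Adj u v) (hu : degG G u = 2) (hv : degG G v = 2) :
    vSum G w u ≠ vSum G w v := by
  obtain ⟨a, hua, hav, hσu⟩ := exists_adj_ne_vSum_eq_add G w huv hu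
  obtain ⟨b, hvb, -, hσv⟩ := exists_adj_ne_vSum_eq_add G w huv.symm hv
  intro hσ
  rw [hσu, hσv, Sym2.eq_swap (a := v)] at hσ
  have hedge : s(u, a) = s(v, b) := hinj _ hua _ hvb (by omega)
  rcases Sym2.eq_iff.mp hedge with ⟨hu_v, -⟩ | ⟨-, ha_v⟩
  · exact huv.ne hu_v
  · exact hav ha_v

theorem stmt_1 {V : Type*} [Fintype V] (G : SimpleGraph V) (w : Sym2 V → ℕ)
    (hpos : ∀ e ∈ G.edgeSet, 0 < w e) (hinj : EdgeInjective G w)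
    (u v : V) (huv : G.Adj u v) (hu : degG G u = 2) (hv : degG G v = 2) :
    vSum G w u ≠ vSum G w v :=
  stmt_1_general G w hinj u v huv hu hv
end

section
/- Let G be a finite simple graph and let w be an edge-injective edge-weighting of G with strictly positive integer weights. Let uv be an edge of G with deg(u) ≥ deg(v) and deg(u) ≥ 2. If min{w(uv') : v' ∈ N(u) \ {v}} ≥ max{w(vu') : u' ∈ N(v) \ {u}} (where the max over an empty set is taken to be 0), then σ_w(u) ≠ σ_w(v); in fact σ_w(u) > σ_w(v). -/
open scoped Classical
open Finset

/-!
Every edge `ua` with `a ≠ v` is at least as heavy as every edge `vb` with `b ≠ u`, and strictly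
heavier because the weighting is injective. As `u` has at least as many such edges as `v`, and at
least one (of positive weight, which settles the case `deg v = 1`), the weight sums without the
common edge `uv` satisfy `σ(v) - w(uv) < σ(u) - w(uv)`.
-/

section SumComparison

variable {ι κ M : Type*} [AddCommMonoid M] [LinearOrder M] [IsOrderedCancelAddMonoid M]

theorem Finset.sum_lt_sum_of_card_le_of_forall_lt {s : Finset ι} {t : Finset κ} {f : ι → M}
    {g : κ → M} (hs : s.Nonempty) (hcard : t.card ≤ s.card) (hf : ∀ a ∈ s, 0 < f a)
    (hlt : ∀ a ∈ s, ∀ b ∈ t, g b < f a) : ∑ b ∈ t, g b < ∑ a ∈ s, f a := by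
  rcases t.eq_empty_or_nonempty with rfl | ht
  · simpa using Finset.sum_pos hf hs
  obtain ⟨a₀, ha₀, hmin⟩ := Finset.exists_mem_eq_inf' hs f
  set m := s.inf' hs f
  calc ∑ b ∈ t, g b < ∑ _b ∈ t, m :=
        Finset.sum_lt_sum_of_nonempty ht fun b hb => hmin ▸ hlt a₀ ha₀ b hb
    _ = t.card • m := Finset.sum_const m
    _ ≤ s.card • m := nsmul_le_nsmul_left (hmin ▸ (hf a₀ ha₀).le) hcard
    _ ≤ ∑ a ∈ s, f a := Finset.card_nsmul_le_sum s f m fun a ha => Finset.inf'_le f ha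

end SumComparison

section NeighbourSums

variable {V : Type*} {G : SimpleGraph V}

theorem EdgeInjective.weight_lt_of_le {w : Sym2 V → ℕ} (hinj : EdgeInjective G w)
    {u v a b : V} (huv : G.Adj u v) (hua : G.Adj u a) (hav : a ≠ v) (hvb : G.Adj v b)
    (hle : w s(v, b) ≤ w s(u, a)) : w s(v, b) < w s(u, a) := by
  refine hle.lt_of_ne fun heq => ?_
  rcases Sym2.eq_iff.mp (hinj _ hvb _ hua heq) with ⟨hvu, -⟩ | ⟨hva, -⟩
  · exact huv.ne hvu.symm
  · exact hav hva.symm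

variable [Fintype V]

theorem vSum_eq_add_sum_erase (w : Sym2 V → ℕ) {u v : V} (huv : G.Adj u v) :
    vSum G w u = w s(u, v) + ∑ x ∈ (univ.filter fun x => G.Adj u x).erase v, w s(u, x) :=
  (Finset.add_sum_erase _ (fun x => w s(u, x)) (by simpa using huv)).symm

theorem card_neighbours_erase {u v : V} (huv : G.Adj u v) :
    ((univ.filter fun x => G.Adj u x).erase v).card = degG G u - 1 :=
  Finset.card_erase_of_mem (by simpa using huv)

end NeighbourSums

theorem stmt_2 {V : Type*} [Fintype V] (G : SimpleGraph V) (w : Sym2 V → ℕ)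
    (hpos : ∀ e ∈ G.edgeSet, 0 < w e) (hinj : EdgeInjective G w)
    (u v : V) (huv : G.Adj u v) (hdeg : degG G v ≤ degG G u) (hu : 2 ≤ degG G u)
    (hminmax : ∀ v' ∈ (Finset.univ.filter (fun x => G.Adj u x)).erase v,
      ((Finset.univ.filter (fun x => G.Adj v x)).erase u).sup (fun u' => w s(v, u'))
        ≤ w s(u, v')) :
    vSum G w u ≠ vSum G w v ∧ vSum G w v < vSum G w u := by
  have hcard := card_neighbours_erase huv
  have hcard' := card_neighbours_erase huv.symm
  have hne : ((univ.filter fun x => G.Adj u x).erase v).Nonempty :=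
    Finset.card_pos.mp (by omega)
  have hsum : ∑ b ∈ (univ.filter fun x => G.Adj v x).erase u, w s(v, b)
      < ∑ a ∈ (univ.filter fun x => G.Adj u x).erase v, w s(u, a) := by
    refine Finset.sum_lt_sum_of_card_le_of_forall_lt hne (by omega) ?_ ?_
    · intro a ha
      exact hpos _ (by simpa using Finset.mem_of_mem_erase ha)
    · intro a ha b hb
      exact hinj.weight_lt_of_le huv (by simpa using Finset.mem_of_mem_erase ha)
        (Finset.ne_of_mem_erase ha) (by simpa using Finset.mem_of_mem_erase hb)
        ((Finset.le_sup (f := fun b => w s(v, b)) hb).trans (hminmax a ha))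
  have hlt : vSum G w v < vSum G w u := by
    rw [vSum_eq_add_sum_erase w huv, vSum_eq_add_sum_erase w huv.symm, Sym2.eq_swap]
    omega
  exact ⟨hlt.ne', hlt⟩
end

section
/- Let G be a finite simple graph, let uv be an edge of G, and let w be a neighbour-sum-distinguishing edge-weighting (with strictly positive integer weights) of G − uv (the graph G with the edge uv removed) such that σ_w(u) ≠ σ_w(v). If W is a set of at least deg_G(u) + deg_G(v) − 1 distinct strictly positive integers, then there exists α ∈ W such that the extension of w assigning weight α to uv is a neighbour-sum-distinguishing edge-weighting of G. -/
/-! Let `G' = G - uv` and `σ = σ_w` on `G'`. Weighting `uv` by `α` raises the sums at `u` and `v`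
by `α` and leaves every other sum unchanged, so the edge `uv` stays distinguished and an edge `xy`
of `G'` can only become a conflict if, say, `x ∈ {u, v}` and `α = σ(y) - σ(x)`. Each of `u`, `v`
thus forbids at most `deg_{G'}` values, `deg_G(u) + deg_G(v) - 2` in total, and `W` has more. -/

open scoped Classical
open Finset

section EdgeUpdate

variable {V : Type*} [Fintype V] {G : SimpleGraph V}

lemma vSum_congr {w w' : Sym2 V → ℕ} {x : V} (h : ∀ y, G.Adj x y → w s(x, y) = w' s(x, y)) :
    vSum G w x = vSum G w' x :=
  sum_congr rfl fun y hy => h y (mem_filter.mp hy).2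

lemma vSum_deleteEdges_of_notMem (w : Sym2 V → ℕ) {e : Sym2 V} {x : V} (hx : x ∉ e) :
    vSum (G.deleteEdges {e}) w x = vSum G w x := by
  unfold vSum
  congr 1
  ext y
  simp only [mem_filter, mem_univ, true_and, SimpleGraph.deleteEdges_adj, Set.mem_singleton_iff,
    and_iff_left_iff_imp]
  rintro - rfl
  exact hx (Sym2.mem_mk_left x y)

lemma filter_adj_eq_insert {x y : V} (h : G.Adj x y) :
    univ.filter (G.Adj x ·) = insert y (univ.filter ((G.deleteEdges {s(x, y)}).Adj x ·)) := by
  ext z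
  simp only [mem_insert, mem_filter, mem_univ, true_and, SimpleGraph.deleteEdges_adj,
    Set.mem_singleton_iff]
  constructor
  · intro hz
    by_cases hzy : z = y
    · exact .inl hzy
    · refine .inr ⟨hz, fun hxz => hzy ?_⟩
      rcases Sym2.eq_iff.mp hxz with ⟨-, rfl⟩ | ⟨rfl, rfl⟩
      · rfl
      · exact absurd hz G.irrefl
  · rintro (rfl | ⟨hz, -⟩)
    exacts [h, hz]

lemma notMem_filter_adj_deleteEdges (x y : V) :
    y ∉ univ.filter ((G.deleteEdges {s(x, y)}).Adj x ·) := by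
  simp

lemma degG_deleteEdges_add_one {e : Sym2 V} (he : e ∈ G.edgeSet) {x : V} (hx : x ∈ e) :
    degG (G.deleteEdges {e}) x + 1 = degG G x := by
  obtain ⟨y, rfl⟩ := Sym2.mem_iff_exists.mp hx
  rw [degG, degG, filter_adj_eq_insert he, card_insert_of_notMem (notMem_filter_adj_deleteEdges x y)]
  -- the two filters differ only in their (classical vs. derived) decidability instances
  congr

lemma vSum_eq_vSum_deleteEdges_add (w : Sym2 V → ℕ) {x y : V} (h : G.Adj x y) :
    vSum G w x = vSum (G.deleteEdges {s(x, y)}) w x + w s(x, y) := by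
  rw [vSum, filter_adj_eq_insert h, sum_insert (notMem_filter_adj_deleteEdges x y), add_comm, vSum]
  congr

lemma vSum_update (w : Sym2 V → ℕ) {e : Sym2 V} (he : e ∈ G.edgeSet) (α : ℕ) (x : V) :
    vSum G (fun f => if f = e then α else w f) x
      = vSum (G.deleteEdges {e}) w x + if x ∈ e then α else 0 := by
  have hrest : vSum (G.deleteEdges {e}) (fun f => if f = e then α else w f) x
      = vSum (G.deleteEdges {e}) w x :=
    vSum_congr fun y hy => if_neg (SimpleGraph.deleteEdges_adj.mp hy).2
  split_ifs with hx
  · obtain ⟨y, rfl⟩ := Sym2.mem_iff_exists.mp hx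
    rw [vSum_eq_vSum_deleteEdges_add _ he, hrest, if_pos rfl]
  · rw [← vSum_deleteEdges_of_notMem _ hx, hrest, add_zero]

end EdgeUpdate

section Forbidden

variable {V : Type*} [Fintype V]

noncomputable def forbiddenWeights (G : SimpleGraph V) (σ : V → ℕ) (x : V) : Finset ℕ :=
  (univ.filter (G.Adj x ·)).image fun y => σ y - σ x

lemma card_forbiddenWeights_le (G : SimpleGraph V) (σ : V → ℕ) (x : V) :
    (forbiddenWeights G σ x).card ≤ degG G x :=
  card_image_le

lemma add_ne_of_notMem_forbiddenWeights {G : SimpleGraph V} {σ : V → ℕ} {x y : V} {α : ℕ}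
    (hxy : G.Adj x y) (hα : α ∉ forbiddenWeights G σ x) : σ x + α ≠ σ y := by
  intro h
  exact hα (mem_image.mpr ⟨y, mem_filter.mpr ⟨mem_univ y, hxy⟩, by omega⟩)

lemma nsd_update {G : SimpleGraph V} {u v : V} (huv : G.Adj u v) {w : Sym2 V → ℕ}
    (hnsd : NSD (G.deleteEdges {s(u, v)}) w)
    (hne : vSum (G.deleteEdges {s(u, v)}) w u ≠ vSum (G.deleteEdges {s(u, v)}) w v) {α : ℕ}
    (hα : ∀ x ∈ s(u, v), α ∉ forbiddenWeights (G.deleteEdges {s(u, v)})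
      (vSum (G.deleteEdges {s(u, v)}) w) x) :
    NSD G (fun e => if e = s(u, v) then α else w e) := by
  intro a b hab
  rw [vSum_update w huv, vSum_update w huv]
  by_cases hedge : s(a, b) = s(u, v)
  · have hσ : vSum (G.deleteEdges {s(u, v)}) w a ≠ vSum (G.deleteEdges {s(u, v)}) w b := by
      rcases Sym2.eq_iff.mp hedge with ⟨rfl, rfl⟩ | ⟨rfl, rfl⟩
      exacts [hne, hne.symm]
    rw [if_pos (hedge ▸ Sym2.mem_mk_left a b), if_pos (hedge ▸ Sym2.mem_mk_right a b)]
    exact fun h => hσ (Nat.add_right_cancel h)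
  have hab' : (G.deleteEdges {s(u, v)}).Adj a b := SimpleGraph.deleteEdges_adj.mpr ⟨hab, hedge⟩
  have hnot_both : ¬ (a ∈ s(u, v) ∧ b ∈ s(u, v)) :=
    fun h => hedge ((Sym2.mem_and_mem_iff (G.ne_of_adj hab)).mp h).symm
  split_ifs with ha hb hb
  · exact absurd ⟨ha, hb⟩ hnot_both
  · exact add_ne_of_notMem_forbiddenWeights hab' (hα a ha)
  · exact (add_ne_of_notMem_forbiddenWeights hab'.symm (hα b hb)).symm
  · simpa using hnsd a b hab'

end Forbidden

theorem stmt_3_general {V : Type*} [Fintype V] (G : SimpleGraph V) (u v : V) (huv : G.Adj u v)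
    (w : Sym2 V → ℕ)
    (hnsd : NSD (G.deleteEdges {s(u, v)}) w)
    (hne : vSum (G.deleteEdges {s(u, v)}) w u ≠ vSum (G.deleteEdges {s(u, v)}) w v)
    (W : Finset ℕ)
    (hWcard : degG G u + degG G v - 1 ≤ W.card) :
    ∃ α ∈ W, NSD G (fun e => if e = s(u, v) then α else w e) := by
  set G' := G.deleteEdges {s(u, v)}
  set σ := vSum G' w
  have hdeg_u : degG G' u + 1 = degG G u := degG_deleteEdges_add_one huv (Sym2.mem_mk_left u v)
  have hdeg_v : degG G' v + 1 = degG G v := degG_deleteEdges_add_one huv (Sym2.mem_mk_right u v)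
  have hB : (forbiddenWeights G' σ u ∪ forbiddenWeights G' σ v).card < W.card := by
    have := card_union_le (forbiddenWeights G' σ u) (forbiddenWeights G' σ v)
    have := card_forbiddenWeights_le G' σ u
    have := card_forbiddenWeights_le G' σ v
    omega
  obtain ⟨α, hαW, hαB⟩ := exists_mem_notMem_of_card_lt_card hB
  refine ⟨α, hαW, nsd_update huv hnsd hne fun x hx => ?_⟩
  rcases Sym2.mem_iff.mp hx with rfl | rfl
  exacts [fun h => hαB (mem_union_left _ h), fun h => hαB (mem_union_right _ h)]

theorem stmt_3 {V : Type*} [Fintype V] (G : SimpleGraph V) (u v : V) (huv : G.Adj u v)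
    (w : Sym2 V → ℕ)
    (hpos : ∀ e ∈ (G.deleteEdges {s(u, v)}).edgeSet, 0 < w e)
    (hnsd : NSD (G.deleteEdges {s(u, v)}) w)
    (hne : vSum (G.deleteEdges {s(u, v)}) w u ≠ vSum (G.deleteEdges {s(u, v)}) w v)
    (W : Finset ℕ) (hWpos : ∀ x ∈ W, 0 < x)
    (hWcard : degG G u + degG G v - 1 ≤ W.card) :
    ∃ α ∈ W, NSD G (fun e => if e = s(u, v) then α else w e) :=
  stmt_3_general G u v huv w hnsd hne W hWcard
end

section
/- For every nice finite simple graph G with m := |E(G)| edges, there exists an injective map w from the edge set of G into {1, 2, ..., 5m} that is a neighbour-sum-distinguishing edge-weighting of G. In particular, χ^{e,1}_Σ(G) ≤ 5·|E(G)|. -/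
/-! Number the `m` edges by an injection `φ` into `Fin n` with `2m ≤ n` and give edge `e` the
weight `φ e + 1`. A conflict `σ(u) = σ(v)` on an edge `uv` is impossible when an endpoint has
degree 1, because niceness makes the other endpoint's sum strictly larger. Otherwise `u` has a
second edge `ux`, and the conflict determines the weight of `ux` from the other weights, so at
most `n(n-1)⋯(n-m+2)` injections have a conflict at `uv`. Summing over the `m` edges gives fewer
than the `n(n-1)⋯(n-m+1)` injections, so some injection has no conflict at all. -/

open scoped Classical
open Finset

/-- `χ^{e,1}_Σ(G)`: the smallest `k` such that `G` admits an edge-injective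
neighbour-sum-distinguishing edge-weighting with weights from `{1, ..., k}`. -/
noncomputable def chiE1 {V : Type*} [Fintype V] (G : SimpleGraph V) : ℕ :=
  sInf {k | ∃ w : Sym2 V → ℕ, (∀ e ∈ G.edgeSet, w e ∈ Finset.Icc 1 k) ∧
    EdgeInjective G w ∧ NSD G w}

theorem Nat.mul_descFactorial_pred_lt {n N : ℕ} (h : 2 * n ≤ N) :
    n * N.descFactorial (n - 1) < N.descFactorial n := by
  cases n with
  | zero => simp
  | succ k =>
    rw [Nat.descFactorial_succ, Nat.add_sub_cancel]
    exact Nat.mul_lt_mul_of_pos_right (by omega) (Nat.descFactorial_pos.2 (by omega))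

namespace Function.Embedding

variable {α β : Type*} [Fintype α] [Fintype β] [DecidableEq α]

theorem card_filter_le_of_eq_of_eqOn_ne (p : (α ↪ β) → Prop) [DecidablePred p] (a : α)
    (hdet : ∀ φ ψ, p φ → p ψ → (∀ b, b ≠ a → φ b = ψ b) → φ a = ψ a) :
    #(univ.filter p) ≤ (Fintype.card β).descFactorial (Fintype.card α - 1) := by
  let restrict (φ : α ↪ β) : {b // b ≠ a} ↪ β := (Function.Embedding.subtype _).trans φ
  have hinj : Set.InjOn restrict (univ.filter p) := by
    intro φ hφ ψ hψ hres
    simp only [coe_filter, mem_univ, true_and, Set.mem_ofPred_eq] at hφ hψ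
    have hne : ∀ b, b ≠ a → φ b = ψ b := fun b hb => DFunLike.congr_fun hres ⟨b, hb⟩
    ext b
    by_cases hb : b = a
    · rw [hb, hdet φ ψ hφ hψ hne]
    · rw [hne b hb]
  calc #(univ.filter p) ≤ #(univ : Finset ({b // b ≠ a} ↪ β)) :=
        card_le_card_of_injOn restrict (fun _ _ => mem_coe.2 (mem_univ _)) hinj
    _ = (Fintype.card β).descFactorial (Fintype.card α - 1) := by
        rw [card_univ, Fintype.card_embedding_eq]; simp

theorem exists_forall_not_of_two_mul_card_le (bad : α → (α ↪ β) → Prop)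
    (hcard : 2 * Fintype.card α ≤ Fintype.card β)
    (hdet : ∀ a, ∃ a', ∀ φ ψ, bad a φ → bad a ψ → (∀ b, b ≠ a' → φ b = ψ b) → φ a' = ψ a') :
    ∃ φ : α ↪ β, ∀ a, ¬ bad a φ := by
  by_contra! hall
  have hcover : (univ : Finset (α ↪ β)) ⊆ univ.biUnion fun a => univ.filter (bad a) :=
    fun φ _ => by simpa using hall φ
  choose det hdet using hdet
  have hcount := calc
    Fintype.card (α ↪ β) ≤ ∑ a, #(univ.filter (bad a)) :=
      (card_le_card hcover).trans card_biUnion_le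
    _ ≤ ∑ _a : α, (Fintype.card β).descFactorial (Fintype.card α - 1) :=
      sum_le_sum fun a _ => card_filter_le_of_eq_of_eqOn_ne (bad a) (det a) (hdet a)
    _ = Fintype.card α * (Fintype.card β).descFactorial (Fintype.card α - 1) := by
      rw [sum_const, card_univ, smul_eq_mul]
  rw [Fintype.card_embedding_eq] at hcount
  exact (Nat.mul_descFactorial_pred_lt hcard).not_ge hcount

end Function.Embedding

namespace SimpleGraph

variable {V : Type*} {G : SimpleGraph V}

noncomputable def weightingOf {n : ℕ} (φ : G.edgeSet ↪ Fin n) (e : Sym2 V) : ℕ :=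
  if h : e ∈ G.edgeSet then φ ⟨e, h⟩ + 1 else 0

theorem weightingOf_of_mem {n : ℕ} (φ : G.edgeSet ↪ Fin n) {e : Sym2 V} (he : e ∈ G.edgeSet) :
    weightingOf φ e = φ ⟨e, he⟩ + 1 :=
  dif_pos he

theorem weightingOf_pos {n : ℕ} (φ : G.edgeSet ↪ Fin n) {e : Sym2 V} (he : e ∈ G.edgeSet) :
    0 < weightingOf φ e := by
  rw [weightingOf_of_mem φ he]
  exact Nat.succ_pos _

theorem injOn_weightingOf {n : ℕ} (φ : G.edgeSet ↪ Fin n) :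
    Set.InjOn (weightingOf φ) G.edgeSet := fun e he f hf h => by
  rw [weightingOf_of_mem φ he, weightingOf_of_mem φ hf, Nat.add_right_cancel_iff] at h
  exact congrArg Subtype.val (φ.injective (Fin.ext h))

theorem mapsTo_weightingOf {n : ℕ} (φ : G.edgeSet ↪ Fin n) :
    Set.MapsTo (weightingOf φ) G.edgeSet ↑(Icc 1 n) := fun e he => by
  rw [mem_coe, mem_Icc, weightingOf_of_mem φ he]
  exact ⟨Nat.le_add_left _ _, (φ ⟨e, he⟩).isLt⟩

variable [Fintype V] {w w' : Sym2 V → ℕ} {u v x : V}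

theorem vSum_congr (h : ∀ y, G.Adj v y → w s(v, y) = w' s(v, y)) :
    vSum G w v = vSum G w' v :=
  sum_congr rfl fun y hy => h y (by simpa using hy)

theorem vSum_eq_add_sum_erase (hx : G.Adj u x) :
    vSum G w u = w s(u, x) + ∑ y ∈ (univ.filter (G.Adj u)).erase x, w s(u, y) :=
  (add_sum_erase _ (fun y => w s(u, y)) (by simpa using hx)).symm

theorem vSum_lt_of_degG_eq_one (hpos : ∀ e ∈ G.edgeSet, 0 < w e) (huv : G.Adj u v)
    (hu : degG G u = 1) (hv : degG G v ≠ 1) : vSum G w u < vSum G w v := by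
  have hNu : univ.filter (G.Adj u) = {v} := by
    obtain ⟨a, ha⟩ := card_eq_one.1 hu
    have hv : v ∈ univ.filter (G.Adj u) := by simpa using huv
    rw [ha] at hv ⊢
    rw [mem_singleton.1 hv]
  have hrest : ((univ.filter (G.Adj v)).erase u).Nonempty := by
    have : 0 < degG G v := card_pos.2 ⟨u, by simpa using huv.symm⟩
    rw [← card_pos, card_erase_of_mem (by simpa using huv.symm)]
    exact Nat.sub_pos_of_lt (show 1 < degG G v by omega)
  have hσu : vSum G w u = w s(v, u) := by rw [vSum, hNu, sum_singleton, Sym2.eq_swap]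
  rw [hσu, vSum_eq_add_sum_erase huv.symm]
  exact Nat.lt_add_of_pos_right
    (sum_pos (fun y hy => hpos _ (by simpa using (mem_erase.1 hy).2)) hrest)

theorem eq_of_vSum_eq_of_vSum_eq (huv : G.Adj u v) (hux : G.Adj u x) (hxv : x ≠ v)
    (hagree : ∀ e ∈ G.edgeSet, e ≠ s(u, x) → w e = w' e)
    (hw : vSum G w u = vSum G w v) (hw' : vSum G w' u = vSum G w' v) :
    w s(u, x) = w' s(u, x) := by
  have hv : vSum G w v = vSum G w' v := vSum_congr fun y hy => hagree _ hy <| by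
    rw [Ne, Sym2.eq_iff]
    rintro (⟨h, -⟩ | ⟨h, -⟩)
    · exact huv.ne h.symm
    · exact hxv h.symm
  have hrest : ∑ y ∈ (univ.filter (G.Adj u)).erase x, w s(u, y) =
      ∑ y ∈ (univ.filter (G.Adj u)).erase x, w' s(u, y) := by
    refine sum_congr rfl fun y hy => ?_
    obtain ⟨hyx, hy⟩ := mem_erase.1 hy
    refine hagree _ (by simpa using hy) ?_
    rw [Ne, Sym2.eq_iff]
    rintro (⟨-, h⟩ | ⟨h, -⟩)
    · exact hyx h
    · exact hux.ne h
  rw [vSum_eq_add_sum_erase hux] at hw hw'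
  omega

theorem exists_edge_eq_of_vSum_eq (hnice : Nice G) (huv : G.Adj u v) :
    ∃ f ∈ G.edgeSet, ∀ w w' : Sym2 V → ℕ, (∀ e ∈ G.edgeSet, 0 < w e) →
      vSum G w u = vSum G w v → vSum G w' u = vSum G w' v →
      (∀ e ∈ G.edgeSet, e ≠ f → w e = w' e) → w f = w' f := by
  by_cases hu : degG G u = 1
  · refine ⟨s(u, v), huv, fun w _ hpos hw _ _ => absurd hw ?_⟩
    exact (vSum_lt_of_degG_eq_one hpos huv hu fun hv => hnice u v huv ⟨hu, hv⟩).ne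
  · have hdeg : 1 < #(univ.filter (G.Adj u)) := by
      have : 0 < degG G u := card_pos.2 ⟨v, by simpa using huv⟩
      exact show 1 < degG G u by omega
    obtain ⟨x, hx, hxv⟩ := exists_mem_ne hdeg v
    have hux : G.Adj u x := by simpa using hx
    exact ⟨s(u, x), hux, fun w w' _ hw hw' hagree =>
      eq_of_vSum_eq_of_vSum_eq huv hux hxv hagree hw hw'⟩

theorem exists_injOn_mapsTo_nsd_of_nice (hnice : Nice G) {n : ℕ} (hn : 2 * G.edgeSet.ncard ≤ n) :
    ∃ w : Sym2 V → ℕ, Set.InjOn w G.edgeSet ∧ Set.MapsTo w G.edgeSet ↑(Icc 1 n) ∧ NSD G w := by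
  let bad (e : G.edgeSet) (φ : G.edgeSet ↪ Fin n) : Prop :=
    ∃ u v, s(u, v) = e.1 ∧ vSum G (weightingOf φ) u = vSum G (weightingOf φ) v
  have hcard : 2 * Fintype.card G.edgeSet ≤ Fintype.card (Fin n) := by
    rwa [← Nat.card_eq_fintype_card, Nat.card_coe_set_eq, Fintype.card_fin]
  obtain ⟨φ, hφ⟩ := Function.Embedding.exists_forall_not_of_two_mul_card_le bad hcard <| by
    rintro ⟨e, he⟩
    induction e using Sym2.ind with | _ u v => ?_
    obtain ⟨f, hf, hdet⟩ := exists_edge_eq_of_vSum_eq hnice he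
    refine ⟨⟨f, hf⟩, fun φ ψ hφ hψ hagree => Fin.ext ?_⟩
    have hendpoints : ∀ χ, bad ⟨s(u, v), he⟩ χ →
        vSum G (weightingOf χ) u = vSum G (weightingOf χ) v := by
      rintro χ ⟨u', v', huv', h⟩
      rcases Sym2.eq_iff.1 huv' with ⟨rfl, rfl⟩ | ⟨rfl, rfl⟩
      exacts [h, h.symm]
    have := hdet (weightingOf φ) (weightingOf ψ) (fun e he => weightingOf_pos φ he)
      (hendpoints φ hφ) (hendpoints ψ hψ) fun e he hne => by
        rw [weightingOf_of_mem φ he, weightingOf_of_mem ψ he,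
          hagree ⟨e, he⟩ fun h => hne (congrArg Subtype.val h)]
    rwa [weightingOf_of_mem φ hf, weightingOf_of_mem ψ hf, Nat.add_right_cancel_iff] at this
  exact ⟨weightingOf φ, injOn_weightingOf φ, mapsTo_weightingOf φ,
    fun u v huv heq => hφ ⟨s(u, v), huv⟩ ⟨u, v, rfl, heq⟩⟩

end SimpleGraph

theorem stmt_10 {V : Type*} [Fintype V] (G : SimpleGraph V) (hnice : Nice G) :
    (∃ w : Sym2 V → ℕ, Set.InjOn w G.edgeSet ∧
        Set.MapsTo w G.edgeSet ↑(Finset.Icc 1 (5 * G.edgeSet.ncard)) ∧ NSD G w)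
      ∧ chiE1 G ≤ 5 * G.edgeSet.ncard := by
  obtain ⟨w, hinj, hmaps, hnsd⟩ :=
    SimpleGraph.exists_injOn_mapsTo_nsd_of_nice hnice (n := 5 * G.edgeSet.ncard) (by omega)
  exact ⟨⟨w, hinj, hmaps, hnsd⟩, Nat.sInf_le ⟨w, hmaps, fun e he f hf h => hinj he hf h, hnsd⟩⟩
end

section
/- Let G be a nice finite simple graph with m := |E(G)| edges. Then for every set W of 2m distinct strictly positive integers, there exists an edge-injective neighbour-sum-distinguishing edge-weighting of G with all weights taken from W (i.e., an injective map from E(G) into W that is neighbour-sum-distinguishing). In particular, χ^{e,1}_Σ(G) ≤ 2·|E(G)|. -/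
open scoped Classical
open Finset

/-!
For an edge `uv`, `σ_w(u) - σ_w(v)` is a linear form in the edge weights with coefficients in
`{-1, 0, 1}`, and it is not identically zero unless `uv` is a component `K₂`. Weight the edges
greedily: when the edge `a` is weighted, avoid the weights already used and, for every form whose
last nonzero coefficient sits at `a`, the unique value killing it. Fewer than `2m` values are
excluded at each step.
-/

section LinearForms

variable {ι κ α R : Type*} [Ring R] [IsDomain R] {φ : α → R}

theorem card_filter_mul_add_eq_zero_le_one (hφ : Function.Injective φ) {a : R} (ha : a ≠ 0)
    (r : R) (W : Finset α) : (W.filter fun x => a * φ x + r = 0).card ≤ 1 := by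
  refine card_le_one.mpr fun x hx y hy => hφ (mul_left_cancel₀ ha ?_)
  rw [mem_filter] at hx hy
  exact add_right_cancel (hx.2.trans hy.2.symm)

theorem exists_injOn_sum_mul_ne_zero [Nonempty α] (hφ : Function.Injective φ)
    (s : Finset ι) (K : Finset κ) (c : κ → ι → R) (hc : ∀ k ∈ K, ∃ i ∈ s, c k i ≠ 0)
    (W : Finset α) (hW : s.card + K.card ≤ W.card) :
    ∃ w : ι → α, Set.InjOn w s ∧ Set.MapsTo w s W ∧
      ∀ k ∈ K, ∑ i ∈ s, c k i * φ (w i) ≠ 0 := by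
  induction s using Finset.induction_on generalizing K with
  | empty =>
    refine ⟨fun _ => Classical.arbitrary α, by simp, fun i hi => absurd hi (notMem_empty i),
      fun k hk => ?_⟩
    obtain ⟨i, hi, -⟩ := hc k hk
    exact absurd hi (notMem_empty i)
  | @insert a s ha ih =>
    set K₀ := K.filter fun k => c k a = 0
    set K₁ := K.filter fun k => c k a ≠ 0
    have hc₀ : ∀ k ∈ K₀, ∃ i ∈ s, c k i ≠ 0 := by
      intro k hk
      rw [mem_filter] at hk
      obtain ⟨i, hi, hki⟩ := hc k hk.1
      rcases mem_insert.mp hi with rfl | hi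
      · exact absurd hk.2 hki
      · exact ⟨i, hi, hki⟩
    have hsplit : K₀.card + K₁.card = K.card := card_filter_add_card_filter_not _
    rw [card_insert_of_notMem ha] at hW
    obtain ⟨w, hinj, hmaps, hw⟩ := ih K₀ hc₀ (by omega)
    set bad : κ → Finset α := fun k =>
      W.filter fun x => c k a * φ x + ∑ i ∈ s, c k i * φ (w i) = 0
    have hbad : (s.image w ∪ K₁.biUnion bad).card < W.card := calc
      _ ≤ (s.image w).card + (K₁.biUnion bad).card := card_union_le _ _
      _ ≤ s.card + ∑ k ∈ K₁, 1 := by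
        gcongr
        · exact card_image_le
        · refine card_biUnion_le.trans (sum_le_sum fun k hk => ?_)
          exact card_filter_mul_add_eq_zero_le_one hφ (mem_filter.mp hk).2 _ W
      _ < W.card := by simp only [sum_const, smul_eq_mul, mul_one]; omega
    obtain ⟨x, hxW, hx⟩ := exists_mem_notMem_of_card_lt_card hbad
    simp only [mem_union, mem_image, mem_biUnion, not_or, not_exists, not_and] at hx
    have hws : ∀ i ∈ s, Function.update w a x i = w i := fun i hi =>
      Function.update_of_ne (ne_of_mem_of_not_mem hi ha) _ _
    have hsum : ∀ k, ∑ i ∈ insert a s, c k i * φ (Function.update w a x i) =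
        c k a * φ x + ∑ i ∈ s, c k i * φ (w i) := fun k => by
      rw [sum_insert ha, Function.update_self, sum_congr rfl fun i hi => by rw [hws i hi]]
    refine ⟨Function.update w a x, ?_, ?_, fun k hk => ?_⟩
    · rw [coe_insert, Set.injOn_insert (by simpa using ha)]
      refine ⟨fun i hi j hj hij => hinj hi hj (by rwa [hws i hi, hws j hj] at hij), ?_⟩
      rintro ⟨i, hi, hix⟩
      rw [hws i hi, Function.update_self] at hix
      exact hx.1 i hi hix
    · intro i hi
      rcases mem_insert.mp hi with rfl | hi
      · simpa using hxW
      · rw [hws i hi]; exact hmaps hi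
    · rw [hsum]
      by_cases hka : c k a = 0
      · rw [hka, zero_mul, zero_add]
        exact hw k (mem_filter.mpr ⟨hk, hka⟩)
      · exact fun h => hx.2 k (mem_filter.mpr ⟨hk, hka⟩) (mem_filter.mpr ⟨hxW, h⟩)

end LinearForms

namespace SimpleGraph

variable {V : Type*} [Fintype V] (G : SimpleGraph V)

theorem vSum_eq_sum_edgeFinset (w : Sym2 V → ℕ) (u : V) :
    vSum G w u = ∑ e ∈ G.edgeFinset with u ∈ e, w e := by
  have himage : (univ.filter (G.Adj u)).image (fun x => s(u, x)) =
      G.edgeFinset.filter (u ∈ ·) := by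
    ext e
    simp only [mem_image, mem_filter, mem_univ, true_and, mem_edgeFinset]
    constructor
    · rintro ⟨x, hx, rfl⟩
      exact ⟨hx, Sym2.mem_mk_left u x⟩
    · rintro ⟨he, hue⟩
      obtain ⟨x, rfl⟩ := Sym2.mem_iff_exists.mp hue
      exact ⟨x, he, rfl⟩
  rw [vSum, ← himage, sum_image fun x _ y _ h => Sym2.congr_right.mp h]

noncomputable def incidenceDiff (u v : V) (e : Sym2 V) : ℤ :=
  (if u ∈ e then 1 else 0) - (if v ∈ e then 1 else 0)

theorem sum_incidenceDiff_mul (w : Sym2 V → ℕ) (u v : V) :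
    ∑ e ∈ G.edgeFinset, incidenceDiff u v e * (w e : ℤ) = vSum G w u - vSum G w v := by
  simp only [incidenceDiff, sub_mul, ite_mul, one_mul, zero_mul, sum_sub_distrib,
    ← sum_filter, vSum_eq_sum_edgeFinset, Nat.cast_sum]

theorem degG_eq_one_of_forall_mem_iff {u v : V} (huv : G.Adj u v)
    (h : ∀ e ∈ G.edgeFinset, u ∈ e ↔ v ∈ e) : degG G u = 1 := by
  refine card_eq_one.mpr ⟨v, eq_singleton_iff_unique_mem.mpr ⟨by simpa using huv, ?_⟩⟩
  intro x hx
  have hvx : v ∈ s(u, x) := (h _ (by simpa using hx)).mp (Sym2.mem_mk_left u x)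
  rcases Sym2.mem_iff.mp hvx with rfl | rfl
  · exact absurd huv G.irrefl
  · rfl

theorem exists_incidenceDiff_ne_zero (hnice : Nice G) {u v : V} (huv : G.Adj u v) :
    ∃ e ∈ G.edgeFinset, incidenceDiff u v e ≠ 0 := by
  by_contra! h
  have hiff : ∀ e ∈ G.edgeFinset, u ∈ e ↔ v ∈ e := fun e he => by
    have := h e he
    unfold incidenceDiff at this
    split_ifs at this <;> simp_all
  exact hnice u v huv ⟨G.degG_eq_one_of_forall_mem_iff huv hiff,
    G.degG_eq_one_of_forall_mem_iff huv.symm fun e he => (hiff e he).symm⟩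

end SimpleGraph

namespace SimpleGraph

variable {V : Type*} [Fintype V] (G : SimpleGraph V)

theorem exists_injOn_mapsTo_nsd (hnice : Nice G) (W : Finset ℕ)
    (hW : 2 * G.edgeSet.ncard ≤ W.card) :
    ∃ w : Sym2 V → ℕ, Set.InjOn w G.edgeSet ∧ Set.MapsTo w G.edgeSet W ∧ NSD G w := by
  -- One form per edge, for an arbitrary orientation `e.out`; reversing it only flips the sign.
  have hc : ∀ e ∈ G.edgeFinset, ∃ f ∈ G.edgeFinset, incidenceDiff e.out.1 e.out.2 f ≠ 0 :=
    fun e he => G.exists_incidenceDiff_ne_zero hnice <| G.mem_edgeSet.mp <| by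
      rw [show s(e.out.1, e.out.2) = e from Quot.out_eq e]
      exact mem_edgeFinset.mp he
  have hcard : G.edgeFinset.card + G.edgeFinset.card ≤ W.card := by
    rw [← coe_edgeFinset, Set.ncard_coe_finset] at hW
    omega
  obtain ⟨w, hinj, hmaps, hw⟩ :=
    exists_injOn_sum_mul_ne_zero Nat.cast_injective _ _ _ hc W hcard
  rw [← coe_edgeFinset]
  refine ⟨w, hinj, hmaps, fun u v huv hsum => hw s(u, v) (by simpa using huv) ?_⟩
  rw [sum_incidenceDiff_mul]
  have hout : s(u, v).out = (u, v) ∨ s(u, v).out = (v, u) :=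
    Sym2.mk_eq_mk_iff.mp (Quot.out_eq _)
  rcases hout with h | h <;> simp [h, hsum]

end SimpleGraph

theorem stmt_11 {V : Type*} [Fintype V] (G : SimpleGraph V) (hnice : Nice G) :
    (∀ W : Finset ℕ, (∀ x ∈ W, 0 < x) → W.card = 2 * G.edgeSet.ncard →
        ∃ w : Sym2 V → ℕ, Set.InjOn w G.edgeSet ∧ Set.MapsTo w G.edgeSet ↑W ∧ NSD G w)
      ∧ chiE1 G ≤ 2 * G.edgeSet.ncard := by
  refine ⟨fun W _ hW => G.exists_injOn_mapsTo_nsd hnice W hW.ge, Nat.sInf_le ?_⟩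
  obtain ⟨w, hinj, hmaps, hnsd⟩ :=
    G.exists_injOn_mapsTo_nsd hnice (Icc 1 (2 * G.edgeSet.ncard)) (by simp)
  exact ⟨w, hmaps, fun e he f hf hef => hinj he hf hef, hnsd⟩
end

section
/- Let G be a nice finite simple graph with m := |E(G)| edges and maximum degree Δ := Δ(G). Then for every set W of m + 2Δ distinct strictly positive integers, there exists an edge-injective neighbour-sum-distinguishing edge-weighting of G with all weights taken from W (i.e., an injective map from E(G) into W that is neighbour-sum-distinguishing). In particular, χ^{e,1}_Σ(G) ≤ |E(G)| + 2Δ(G). -/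
open scoped Classical
open Finset

/-!
The weights are chosen greedily, one edge at a time and pairwise distinct. Call an edge `uv`
settled once every other edge at `u` or `v` carries its weight; the invariant is that the partial
sums distinguish the endpoints of every settled edge. Giving the next edge `f` the weight `t > 0`
adds `t` to both sums of `f` itself and to exactly one endpoint sum of every other edge meeting
`f`, so besides the weights already used only the at most `2Δ` values `|σ(u) - σ(v)|`, for `uv`
meeting `f`, are forbidden: fewer than `m + 2Δ` values in all. Niceness makes the invariant hold
at the start, when no edge is settled yet.
-/

namespace NSDWeighting

variable {V : Type*} {G : SimpleGraph V}

def Settled (G : SimpleGraph V) (S : Finset (Sym2 V)) (u v : V) : Prop :=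
  ∀ e ∈ G.edgeSet, e ≠ s(u, v) → u ∈ e ∨ v ∈ e → e ∈ S

lemma Settled.symm {S : Finset (Sym2 V)} {u v : V} (h : Settled G S u v) : Settled G S v u :=
  fun e he hne hmem => h e he (Sym2.eq_swap ▸ hne) hmem.symm

variable [Fintype V]

lemma vSum_update_of_eq_zero (w : Sym2 V → ℕ) {f : Sym2 V} (hf : f ∈ G.edgeSet) (hw : w f = 0)
    (t : ℕ) (v : V) :
    vSum G (Function.update w f t) v = vSum G w v + if v ∈ f then t else 0 := by
  have hupdate : Function.update w f t = w + Pi.single f t := by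
    ext e
    by_cases he : e = f <;> simp [he, hw]
  rw [hupdate, vSum, vSum]
  simp only [Pi.add_apply, sum_add_distrib]
  congr 1
  split_ifs with hv
  · obtain ⟨c, rfl⟩ := Sym2.mem_iff_exists.1 hv
    simp only [Pi.single_apply, Sym2.congr_right]
    rw [sum_ite_eq', if_pos (mem_filter.2 ⟨mem_univ c, hf⟩)]
  · refine sum_eq_zero fun x _ => Pi.single_eq_of_ne ?_ _
    rintro rfl
    exact hv (Sym2.mem_mk_left v x)

lemma exists_adj_ne_of_one_lt_degG {u : V} (hu : 1 < degG G u) (v : V) :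
    ∃ c, G.Adj u c ∧ c ≠ v := by
  obtain ⟨c, hc, hcv⟩ := exists_mem_ne hu v
  exact ⟨c, (mem_filter.1 hc).2, hcv⟩

lemma one_le_degG {u v : V} (huv : G.Adj u v) : 1 ≤ degG G u :=
  card_pos.2 ⟨v, mem_filter.2 ⟨mem_univ v, huv⟩⟩

lemma not_settled_empty (hnice : Nice G) {u v : V} (huv : G.Adj u v) : ¬ Settled G ∅ u v := by
  have hdeg_le_one : ∀ {x y : V}, G.Adj x y → Settled G ∅ x y → degG G x ≤ 1 := by
    intro x y hxy hsettled
    by_contra! hx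
    obtain ⟨c, hxc, hcy⟩ := exists_adj_ne_of_one_lt_degG hx y
    exact notMem_empty _ <| hsettled s(x, c) hxc (fun h => hcy (Sym2.congr_right.1 h))
      (Or.inl (Sym2.mem_mk_left x c))
  intro hsettled
  have hu := hdeg_le_one huv hsettled
  have hv := hdeg_le_one huv.symm hsettled.symm
  exact hnice u v huv ⟨le_antisymm hu (one_le_degG huv), le_antisymm hv (one_le_degG huv.symm)⟩

noncomputable def conflicts (G : SimpleGraph V) (w : Sym2 V → ℕ) (a : V) : Finset ℕ :=
  (univ.filter (G.Adj a)).image fun n => Nat.dist (vSum G w a) (vSum G w n)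

lemma card_conflicts_le (w : Sym2 V → ℕ) (a : V) :
    (conflicts G w a).card ≤ univ.sup (degG G) :=
  card_image_le.trans (le_sup (f := degG G) (mem_univ a))

lemma vSum_add_ne_of_notMem_conflicts {w : Sym2 V → ℕ} {u v : V} {t : ℕ} (ht : 0 < t)
    (hconf : t ∉ conflicts G w u) (huv : G.Adj u v) : vSum G w u + t ≠ vSum G w v := by
  intro heq
  refine hconf (mem_image.2 ⟨v, mem_filter.2 ⟨mem_univ v, huv⟩, ?_⟩)
  unfold Nat.dist
  omega

structure IsPartialWeighting (G : SimpleGraph V) (W : Finset ℕ) (S : Finset (Sym2 V))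
    (w : Sym2 V → ℕ) : Prop where
  eq_zero : ∀ e ∉ S, w e = 0
  injOn : Set.InjOn w S
  mapsTo : Set.MapsTo w S W
  vSum_ne : ∀ u v, G.Adj u v → Settled G S u v → vSum G w u ≠ vSum G w v

lemma isPartialWeighting_empty (hnice : Nice G) (W : Finset ℕ) :
    IsPartialWeighting G W ∅ 0 where
  eq_zero _ _ := rfl
  injOn := by simp
  mapsTo := by simp [Set.MapsTo]
  vSum_ne _ _ huv hsettled := absurd hsettled (not_settled_empty hnice huv)

namespace IsPartialWeighting

variable {W : Finset ℕ} {S : Finset (Sym2 V)} {w : Sym2 V → ℕ} {f : Sym2 V} {t : ℕ}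

lemma vSum_update_ne (hw : IsPartialWeighting G W S w) (hf : f ∈ G.edgeSet) (hfS : f ∉ S)
    (ht : 0 < t) (hconf : ∀ x ∈ f, t ∉ conflicts G w x) {u v : V} (huv : G.Adj u v)
    (hsettled : Settled G (insert f S) u v) :
    vSum G (Function.update w f t) u ≠ vSum G (Function.update w f t) v := by
  have hw0 : w f = 0 := hw.eq_zero f hfS
  rw [vSum_update_of_eq_zero w hf hw0, vSum_update_of_eq_zero w hf hw0]
  by_cases hu : u ∈ f <;> by_cases hv : v ∈ f
  · have hf_eq : f = s(u, v) := (Sym2.mem_and_mem_iff huv.ne).1 ⟨hu, hv⟩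
    have hsettled' : Settled G S u v := fun e he hne hmem =>
      (mem_insert.1 (hsettled e he hne hmem)).resolve_left (hf_eq ▸ hne)
    simpa [hu, hv] using hw.vSum_ne u v huv hsettled'
  · simpa [hu, hv] using vSum_add_ne_of_notMem_conflicts ht (hconf u hu) huv
  · simpa [hu, hv] using (vSum_add_ne_of_notMem_conflicts ht (hconf v hv) huv.symm).symm
  · have hsettled' : Settled G S u v := fun e he hne hmem =>
      (mem_insert.1 (hsettled e he hne hmem)).resolve_left (by rintro rfl; tauto)
    simpa [hu, hv] using hw.vSum_ne u v huv hsettled'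

lemma update (hw : IsPartialWeighting G W S w) (hf : f ∈ G.edgeSet) (hfS : f ∉ S)
    (htW : t ∈ W) (ht : 0 < t) (hused : t ∉ S.image w) (hconf : ∀ x ∈ f, t ∉ conflicts G w x) :
    IsPartialWeighting G W (insert f S) (Function.update w f t) := by
  have heqOn : Set.EqOn w (Function.update w f t) S := fun e he =>
    (Function.update_of_ne (ne_of_mem_of_not_mem he hfS) t w).symm
  refine ⟨fun e he => ?_, ?_, ?_, fun u v huv => hw.vSum_update_ne hf hfS ht hconf huv⟩
  · rw [mem_insert, not_or] at he
    rw [Function.update_of_ne he.1, hw.eq_zero e he.2]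
  · rw [coe_insert, Set.injOn_insert (mod_cast hfS), Function.update_self, ← heqOn.image_eq]
    exact ⟨hw.injOn.congr heqOn, by simpa using hused⟩
  · intro e he
    obtain rfl | he := mem_insert.1 he
    · simpa using htW
    · exact hw.mapsTo.congr heqOn he

lemma exists_extension (hw : IsPartialWeighting G W S w) (hpos : ∀ x ∈ W, 0 < x)
    (hcard : S.card + 2 * univ.sup (degG G) < W.card) (hf : f ∈ G.edgeSet) (hfS : f ∉ S) :
    ∃ w', IsPartialWeighting G W (insert f S) w' := by
  induction f using Sym2.ind with
  | h a b =>
    set forbidden := S.image w ∪ (conflicts G w a ∪ conflicts G w b)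
    have hforbidden : forbidden.card < W.card :=
      calc forbidden.card ≤ S.card + (univ.sup (degG G) + univ.sup (degG G)) :=
            (card_union_le _ _).trans <| add_le_add card_image_le <|
              (card_union_le _ _).trans <|
                add_le_add (card_conflicts_le w a) (card_conflicts_le w b)
        _ < W.card := by omega
    obtain ⟨t, htW, ht⟩ := exists_mem_notMem_of_card_lt_card hforbidden
    simp only [forbidden, mem_union, not_or] at ht
    refine ⟨_, hw.update hf hfS htW (hpos t htW) ht.1 fun x hx => ?_⟩
    rcases Sym2.mem_iff.1 hx with rfl | rfl
    exacts [ht.2.1, ht.2.2]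

end IsPartialWeighting

lemma exists_isPartialWeighting_edgeFinset (hnice : Nice G) {W : Finset ℕ}
    (hpos : ∀ x ∈ W, 0 < x) (hcard : W.card = G.edgeFinset.card + 2 * univ.sup (degG G)) :
    ∃ w, IsPartialWeighting G W G.edgeFinset w := by
  refine Finset.induction_on' (motive := fun S => ∃ w, IsPartialWeighting G W S w) G.edgeFinset
    ⟨0, isPartialWeighting_empty hnice W⟩ ?_
  rintro f S hf hS hfS ⟨w, hw⟩
  have hS_lt : S.card < G.edgeFinset.card := card_lt_card ⟨hS, fun h => hfS (h hf)⟩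
  exact hw.exists_extension hpos (by omega) (SimpleGraph.mem_edgeFinset.1 hf) hfS

theorem exists_injOn_mapsTo_nsd (hnice : Nice G) {W : Finset ℕ} (hpos : ∀ x ∈ W, 0 < x)
    (hcard : W.card = G.edgeSet.ncard + 2 * univ.sup (degG G)) :
    ∃ w : Sym2 V → ℕ, Set.InjOn w G.edgeSet ∧ Set.MapsTo w G.edgeSet W ∧ NSD G w := by
  rw [← G.coe_edgeFinset, Set.ncard_coe_finset] at hcard
  obtain ⟨w, hw⟩ := exists_isPartialWeighting_edgeFinset hnice hpos hcard
  refine ⟨w, G.coe_edgeFinset ▸ hw.injOn, G.coe_edgeFinset ▸ hw.mapsTo, fun u v huv => ?_⟩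
  exact hw.vSum_ne u v huv fun e he _ _ => SimpleGraph.mem_edgeFinset.2 he

theorem chiE1_le (hnice : Nice G) : chiE1 G ≤ G.edgeSet.ncard + 2 * univ.sup (degG G) := by
  set K := G.edgeSet.ncard + 2 * univ.sup (degG G)
  obtain ⟨w, hinj, hmaps, hnsd⟩ := exists_injOn_mapsTo_nsd hnice (W := Icc 1 K)
    (fun x hx => (mem_Icc.1 hx).1) (by simp [K])
  exact Nat.sInf_le ⟨w, fun e he => hmaps he, fun e he f hf => hinj he hf, hnsd⟩

end NSDWeighting

theorem stmt_12 {V : Type*} [Fintype V] (G : SimpleGraph V) (hnice : Nice G) :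
    (∀ W : Finset ℕ, (∀ x ∈ W, 0 < x) →
        W.card = G.edgeSet.ncard + 2 * Finset.univ.sup (degG G) →
        ∃ w : Sym2 V → ℕ, Set.InjOn w G.edgeSet ∧ Set.MapsTo w G.edgeSet ↑W ∧ NSD G w)
      ∧ chiE1 G ≤ G.edgeSet.ncard + 2 * Finset.univ.sup (degG G) :=
  ⟨fun _ hpos hcard => NSDWeighting.exists_injOn_mapsTo_nsd hnice hpos hcard,
    NSDWeighting.chiE1_le hnice⟩
end

section
/- Let G be a nice finite simple graph that is 2-degenerate, i.e., every non-empty subgraph of G has a vertex of degree at most 2, and let m := |E(G)|. Then for every set W of m + 4 distinct strictly positive integers, there exists an edge-injective neighbour-sum-distinguishing edge-weighting of G with all weights taken from W (i.e., an injective map from E(G) into W that is neighbour-sum-distinguishing). In particular, χ^{e,1}_Σ(G) ≤ |E(G)| + 4. -/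
open scoped Classical
open Finset

/-!
Rank the vertices so that each has at most two neighbours of higher rank, and weight the edges
while processing the vertices from the highest rank down: processing `a` weights the edges from
`a` to its unprocessed neighbours `N`. Afterwards the sum at `a` is final, and `a` has at most two
processed neighbours; a vertex of `N` whose last unweighted edge was the one to `a` becomes final
too, with at most one processed neighbour besides `a`. The invariant is that two adjacent vertices
with no unweighted edge except the one between them already have different sums: at the start
this is niceness, at the end it is the claim. Since at least `#N + 4` weights are still unused,
the new weights can be chosen one at a time, each avoiding boundedly many values; only when two or
more vertices of `N` become final at once, the set of their weights is chosen first, which fixes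
the sum at `a`, and Hall's theorem distributes them.
-/

theorem exists_injOn_mem_sdiff {ι α : Type*} [DecidableEq α] [Inhabited α]
    (T : Finset ι) (B : Finset α) (F : ι → Finset α)
    (hall : ∀ s ⊆ T, s.Nonempty → #s + #{v ∈ B | ∀ t ∈ s, v ∈ F t} ≤ #B) :
    ∃ f : ι → α, Set.InjOn f T ∧ ∀ t ∈ T, f t ∈ B \ F t := by
  obtain ⟨f, hf, hfB⟩ := (all_card_le_biUnion_card_iff_exists_injective
    (fun t : T => B \ F t)).mp fun s => by
      rcases s.eq_empty_or_nonempty with rfl | hs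
      · simp
      set s' := s.map (Function.Embedding.subtype (· ∈ T))
      have hsub : B \ {v ∈ B | ∀ t ∈ s', v ∈ F t} ⊆ s.biUnion fun t => B \ F t := by
        intro v hv
        simp only [s', mem_sdiff, mem_filter, mem_map, Function.Embedding.subtype_apply,
          forall_exists_index, and_imp, forall_apply_eq_imp_iff₂, not_and, not_forall] at hv
        obtain ⟨t, hts, hvt⟩ := hv.2 hv.1
        exact mem_biUnion.2 ⟨t, hts, mem_sdiff.2 ⟨hv.1, hvt⟩⟩
      have := hall s' (fun t ht => by
        obtain ⟨t', -, rfl⟩ := mem_map.1 ht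
        exact t'.2) (hs.map)
      rw [card_map] at this
      calc #s ≤ #(B \ {v ∈ B | ∀ t ∈ s', v ∈ F t}) := by
            rw [card_sdiff_of_subset (filter_subset _ _)]; omega
        _ ≤ _ := card_le_card hsub
  refine ⟨fun t => if h : t ∈ T then f ⟨t, h⟩ else default, fun a ha b hb hab => ?_,
    fun t ht => by simpa [ht] using hfB ⟨t, ht⟩⟩
  simp only [mem_coe] at ha hb
  exact congrArg Subtype.val (hf (by simpa [ha, hb] using hab))

theorem card_filter_image_le_card_fiber_le_three {ι : Type*} (T : Finset ι) (f : ι → ℕ) :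
    #{v ∈ T.image f | #T - 2 ≤ #{t ∈ T | f t = v}} ≤ 3 := by
  set X := {v ∈ T.image f | #T - 2 ≤ #{t ∈ T | f t = v}}
  by_cases hT : #T ≤ 3
  · exact (card_filter_le _ _).trans (card_image_le.trans hT)
  have hfib : #X * (#T - 2) ≤ #T := calc
    #X * (#T - 2) ≤ ∑ v ∈ X, #{t ∈ T | f t = v} := by
      rw [← smul_eq_mul]; exact card_nsmul_le_sum _ _ _ fun v hv => (mem_filter.1 hv).2
    _ = ∑ v ∈ X, ∑ t ∈ T with f t = v, 1 := by simp
    _ ≤ ∑ v ∈ T.image f, ∑ t ∈ T with f t = v, 1 := sum_le_sum_of_subset (filter_subset _ _)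
    _ = #T := by rw [sum_fiberwise_of_maps_to (fun t ht => mem_image_of_mem f ht)]; simp
  by_contra hX
  have := Nat.mul_le_mul_right (#T - 2) (show 3 ≤ #X by omega)
  omega

theorem exists_add_sum_erase_notMem (R D : Finset ℕ) (hRD : #D < #R) (s₀ : ℕ) :
    ∃ q ∈ R, s₀ + ∑ x ∈ R.erase q, x ∉ D := by
  have hinj : Set.InjOn (fun q => s₀ + ∑ x ∈ R.erase q, x) R := by
    intro a ha b hb hab
    have := sum_erase_add R (fun x => x) ha
    have := sum_erase_add R (fun x => x) hb
    simp only at hab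
    omega
  obtain ⟨_, he, hD⟩ := exists_mem_notMem_of_card_lt_card
    (hRD.trans_le (card_image_of_injOn hinj).ge)
  obtain ⟨q, hq, rfl⟩ := mem_image.1 he
  exact ⟨q, hq, hD⟩

/-- Hall's condition for `exists_injOn_mem_sdiff` with `F t = {bad t, σ - c t}`. -/
theorem card_add_card_filter_forall_mem_le {ι : Type*} {T : Finset ι} (hT : 2 ≤ #T)
    {B : Finset ℕ} (hB : #B = #T) (hBpos : ∀ v ∈ B, 0 < v) {σ : ℕ} (hBσ : ∀ v ∈ B, v < σ)
    {c : ι → ℕ} (hc : ∀ t₁ ∈ T, ∀ t₂ ∈ T, c t₁ = c t₂ → c t₁ ≠ 0 → t₁ = t₂) {bad : ι → ℕ}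
    (hrare : ∀ v ∈ B, ∀ t ∈ T, bad t = v → #{t ∈ T | bad t = v} + 2 < #T)
    {s : Finset ι} (hsT : s ⊆ T) (hs : s.Nonempty) :
    #s + #{v ∈ B | ∀ t ∈ s, v ∈ ({bad t, σ - c t} : Finset ℕ)} ≤ #B := by
  obtain ⟨t₀, ht₀⟩ := hs
  set I := {v ∈ B | ∀ t ∈ s, v ∈ ({bad t, σ - c t} : Finset ℕ)}
  have hI : I ⊆ {bad t₀, σ - c t₀} := fun v hv => (mem_filter.1 hv).2 t₀ ht₀
  by_cases hsmall : #s + 2 ≤ #T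
  · have := (card_le_card hI).trans (card_insert_le _ _)
    rw [card_singleton] at this
    omega
  -- a value of `I` is `σ - c t` for at most one `t`, so it is `bad t` for all other `t ∈ s`
  have hfew : ∀ v ∈ I, v = σ - c t₀ ∧ #s ≤ 1 := by
    intro v hv
    obtain ⟨hvB, hvs⟩ := mem_filter.1 hv
    have hgood : #{t ∈ s | ¬ bad t = v} ≤ 1 := card_le_one.2 fun t₁ h₁ t₂ h₂ => by
      obtain ⟨ht₁, hb₁⟩ := mem_filter.1 h₁
      obtain ⟨ht₂, hb₂⟩ := mem_filter.1 h₂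
      have e₁ := hvs t₁ ht₁
      have e₂ := hvs t₂ ht₂
      simp only [mem_insert, mem_singleton] at e₁ e₂
      have := hBσ v hvB
      have := hBpos v hvB
      exact hc t₁ (hsT ht₁) t₂ (hsT ht₂) (by omega) (by omega)
    have hsplit := card_filter_add_card_filter_not (s := s) (fun t => bad t = v)
    have hsub := card_le_card (filter_subset_filter (fun t => bad t = v) hsT)
    have hbad : ∀ t ∈ s, bad t ≠ v := fun t ht htv => by
      have := hrare v hvB t (hsT ht) htv
      omega
    have hnone : #{t ∈ s | bad t = v} = 0 := card_eq_zero.2 (filter_false_of_mem hbad)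
    have := hI hv
    simp only [mem_insert, mem_singleton] at this
    exact ⟨this.resolve_left (hbad t₀ ht₀).symm, by omega⟩
  rcases I.eq_empty_or_nonempty with hI0 | ⟨v, hv⟩
  · rw [hI0, card_empty, hB]
    exact (card_le_card hsT).trans (by omega)
  · have : #I ≤ 1 := card_le_one.2 fun a ha b hb => (hfew a ha).1.trans (hfew b hb).1.symm
    have := (hfew v hv).2
    omega

theorem exists_injOn_add_ne_add_sum {ι : Type*} (T : Finset ι) (hT : 2 ≤ #T)
    (Q : Finset ℕ) (hQ : ∀ n ∈ Q, 0 < n) (hTQ : #T + 4 ≤ #Q) (s₀ : ℕ) (D : Finset ℕ)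
    (hD : #D ≤ 2) (c : ι → ℕ) (hc : ∀ t₁ ∈ T, ∀ t₂ ∈ T, c t₁ = c t₂ → c t₁ ≠ 0 → t₁ = t₂)
    (bad : ι → ℕ) :
    ∃ β : ι → ℕ, Set.InjOn β T ∧ (∀ t ∈ T, β t ∈ Q ∧ β t ≠ bad t) ∧
      s₀ + ∑ t ∈ T, β t ∉ D ∧ ∀ t ∈ T, c t + β t ≠ s₀ + ∑ t ∈ T, β t := by
  -- excluding the values that are `bad t` for many `t` makes Hall's condition hold
  set X := {v ∈ T.image bad | #T - 2 ≤ #{t ∈ T | bad t = v}}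
  have hX : #X ≤ 3 := card_filter_image_le_card_fiber_le_three T bad
  obtain ⟨R, hRQ, hR⟩ := exists_subset_card_eq (show #T + 1 ≤ #(Q \ X) by
    have := le_card_sdiff X Q
    omega)
  -- the set of values, and with it their total `σ`, is fixed before they are distributed
  obtain ⟨q, hq, hqD⟩ := exists_add_sum_erase_notMem R D (by omega) s₀
  set B := R.erase q
  set σ := s₀ + ∑ x ∈ B, x
  have hB : #B = #T := by rw [card_erase_of_mem hq]; omega
  have hBQ : ∀ v ∈ B, v ∈ Q ∧ v ∉ X := fun v hv => mem_sdiff.1 (hRQ (mem_of_mem_erase hv))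
  have hBσ : ∀ v ∈ B, v < σ := by
    intro v hv
    obtain ⟨u, hu, huv⟩ := exists_mem_ne (by omega : 1 < #B) v
    have := single_lt_sum (f := id) huv hv hu (hQ u (hBQ u hu).1) fun _ _ _ => Nat.zero_le _
    simp only [id] at this
    omega
  have hrare : ∀ v ∈ B, ∀ t ∈ T, bad t = v → #{t ∈ T | bad t = v} + 2 < #T :=
    fun v hv t ht htv => by
      have := (hBQ v hv).2
      simp only [X, mem_filter, mem_image, not_and, not_le] at this
      have := this ⟨t, ht, htv⟩
      omega
  obtain ⟨β, hβinj, hβ⟩ := exists_injOn_mem_sdiff T B (fun t => {bad t, σ - c t})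
    fun s hsT hs => card_add_card_filter_forall_mem_le hT hB (fun v hv => hQ v (hBQ v hv).1) hBσ
      hc hrare hsT hs
  have hβ' : ∀ t ∈ T, β t ∈ B ∧ β t ≠ bad t ∧ β t ≠ σ - c t := fun t ht => by
    simpa using hβ t ht
  have himage : T.image β = B := eq_of_subset_of_card_le
    (fun v hv => by obtain ⟨t, ht, rfl⟩ := mem_image.1 hv; exact (hβ' t ht).1)
    (by rw [card_image_of_injOn hβinj, hB])
  have hsum : ∑ t ∈ T, β t = ∑ x ∈ B, x := by rw [← himage, sum_image hβinj]
  refine ⟨β, hβinj, fun t ht => ⟨(hBQ _ (hβ' t ht).1).1, (hβ' t ht).2.1⟩, by rwa [hsum],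
    fun t ht => ?_⟩
  have := (hβ' t ht).2.2
  omega

section Admissible

variable {V : Type*} [DecidableEq V] (P : Finset ℕ) (bad c : V → ℕ) (R : SimpleGraph V)

def IsAdmissible (A : Finset V) (β : V → ℕ) : Prop :=
  Set.InjOn β A ∧ (∀ x ∈ A, β x ∈ P ∧ β x ≠ bad x) ∧
    ∀ x ∈ A, ∀ y ∈ A, R.Adj x y → c x + β x ≠ c y + β y

variable {P bad c R}

theorem IsAdmissible.exists_insert (hR : ∀ x, (R.neighborSet x).Subsingleton)
    {A : Finset V} {β : V → ℕ} (h : IsAdmissible P bad c R A β) {x : V} (hx : x ∉ A)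
    (E : Finset ℕ) (hcard : #A + #E + 2 < #P) :
    ∃ b ∉ E, IsAdmissible P bad c R (insert x A) (Function.update β x b) := by
  set partner := {y ∈ A | R.Adj x y}.image fun y => c y + β y - c x
  have hpartner : #partner ≤ 1 := card_image_le.trans <| card_le_one.2 fun y hy z hz =>
    hR x (mem_filter.1 hy).2 (mem_filter.1 hz).2
  obtain ⟨b, hbP, hb⟩ := exists_mem_notMem_of_card_lt_card
    (s := A.image β ∪ {bad x} ∪ partner ∪ E) (t := P) (by
      have := card_union_le (A.image β ∪ {bad x} ∪ partner) E
      have := card_union_le (A.image β ∪ {bad x}) partner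
      have := card_union_le (A.image β) {bad x}
      have := card_image_le (s := A) (f := β)
      simp only [card_singleton] at *
      omega)
  simp only [mem_union, mem_image, mem_singleton, mem_filter, not_or, not_exists, not_and,
    partner] at hb
  obtain ⟨⟨⟨hbA, hbbad⟩, hbpartner⟩, hbE⟩ := hb
  have hupd : ∀ y ∈ A, Function.update β x b y = β y := fun y hy =>
    Function.update_of_ne (ne_of_mem_of_not_mem hy hx) _ _
  have hpair : ∀ y ∈ A, R.Adj x y → c x + b ≠ c y + β y := fun y hy hxy => by
    have := hbpartner y ⟨hy, hxy⟩
    omega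
  obtain ⟨hinj, hmem, hadj⟩ := h
  refine ⟨b, hbE, ?_, ?_, ?_⟩
  · rw [coe_insert, Set.injOn_insert (by simpa using hx), Function.update_self]
    refine ⟨fun y hy z hz hyz => hinj hy hz ?_, ?_⟩
    · rwa [hupd y hy, hupd z hz] at hyz
    · rintro ⟨y, hy, hyb⟩
      exact hbA y hy (by rwa [hupd y hy] at hyb)
  · simp only [mem_insert, forall_eq_or_imp, Function.update_self]
    exact ⟨⟨hbP, hbbad⟩, fun y hy => by rw [hupd y hy]; exact hmem y hy⟩
  · simp only [mem_insert, forall_eq_or_imp, Function.update_self]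
    refine ⟨⟨fun h => absurd h (R.loopless.irrefl x), fun y hy hxy => by
      rw [hupd y hy]; exact hpair y hy hxy⟩, fun y hy => ⟨fun hyx => ?_, fun z hz hyz => ?_⟩⟩
    · rw [hupd y hy]; exact (hpair y hy hyx.symm).symm
    · rw [hupd y hy, hupd z hz]; exact hadj y hy z hz hyz

theorem exists_isAdmissible (hR : ∀ x, (R.neighborSet x).Subsingleton) (A : Finset V)
    (hA : #A + 2 ≤ #P) : ∃ β, IsAdmissible P bad c R A β := by
  induction A using Finset.induction_on with
  | empty => exact ⟨0, by simp [IsAdmissible]⟩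
  | insert x A hx ih =>
    rw [card_insert_of_notMem hx] at hA
    obtain ⟨β, hβ⟩ := ih (by omega)
    obtain ⟨b, -, hb⟩ := hβ.exists_insert hR hx ∅ (by simp; omega)
    exact ⟨_, hb⟩

theorem sum_insert_update {A : Finset V} {x : V} (hx : x ∉ A) (β : V → ℕ) (b : ℕ) :
    ∑ y ∈ insert x A, Function.update β x b y = b + ∑ y ∈ A, β y := by
  rw [sum_insert hx, Function.update_self, sum_update_of_notMem hx]

theorem IsAdmissible.exists_insert_add_sum_notMem (hR : ∀ x, (R.neighborSet x).Subsingleton)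
    {A : Finset V} {β : V → ℕ} (h : IsAdmissible P bad c R A β) {x : V} (hx : x ∉ A)
    (q : ℕ) (D : Finset ℕ) (hcard : #A + #D + 2 < #P) :
    ∃ b, IsAdmissible P bad c R (insert x A) (Function.update β x b) ∧
      q + (b + ∑ y ∈ A, β y) ∉ D := by
  obtain ⟨b, hbD, hb⟩ := h.exists_insert hR hx (D.image (· - (q + ∑ y ∈ A, β y)))
    (by have := card_image_le (s := D) (f := (· - (q + ∑ y ∈ A, β y))); omega)
  refine ⟨b, hb, fun hD => hbD (mem_image.2 ⟨_, hD, by omega⟩)⟩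

end Admissible

section StarWeights

variable {V : Type*} [DecidableEq V] {P : Finset ℕ} {bad c : V → ℕ} {R : SimpleGraph V}

theorem exists_isAdmissible_add_sum_notMem (hR : ∀ x, (R.neighborSet x).Subsingleton)
    (N : Finset V) (hNP : #N + 4 ≤ #P) (p₀ : ℕ) (D : Finset ℕ) (hD : #D ≤ 2)
    (hempty : N = ∅ → p₀ ∉ D) :
    ∃ β, IsAdmissible P bad c R N β ∧ p₀ + ∑ x ∈ N, β x ∉ D := by
  rcases N.eq_empty_or_nonempty with rfl | ⟨x, hx⟩
  · exact ⟨0, by simp [IsAdmissible], by simpa using hempty rfl⟩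
  have hxN := notMem_erase x N
  have := card_pos.2 ⟨x, hx⟩
  obtain ⟨β, hβ⟩ := exists_isAdmissible (P := P) (bad := bad) (c := c) hR (N.erase x)
    (by rw [card_erase_of_mem hx]; omega)
  obtain ⟨b, hb, hbD⟩ := hβ.exists_insert_add_sum_notMem hR hxN p₀ D
    (by rw [card_erase_of_mem hx]; omega)
  rw [← sum_insert_update hxN, insert_erase hx] at hbD
  rw [insert_erase hx] at hb
  exact ⟨_, hb, hbD⟩

theorem exists_isAdmissible_of_single (hR : ∀ x, (R.neighborSet x).Subsingleton)
    {N : Finset V} {t : V} (ht : t ∈ N) (hNP : #N + 4 ≤ #P) (p₀ : ℕ) (D : Finset ℕ)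
    (hD : #D ≤ 2) (hsingle : N = {t} → c t ≠ p₀) :
    ∃ β, IsAdmissible P bad c R N β ∧ p₀ + ∑ x ∈ N, β x ∉ D ∧
      c t + β t ≠ p₀ + ∑ x ∈ N, β x := by
  by_cases hN : N = {t}
  · have h₀ : IsAdmissible P bad c R ∅ 0 := by simp [IsAdmissible]
    obtain ⟨b, hb, hbD⟩ := h₀.exists_insert_add_sum_notMem hR (notMem_empty t) p₀ D
      (by rw [hN, card_singleton] at hNP; rw [card_empty]; omega)
    have := hsingle hN
    subst hN
    refine ⟨_, hb, by simpa using hbD, by simpa using this⟩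
  obtain ⟨xs, hxs, hxst⟩ := exists_mem_ne (one_lt_card_iff_nontrivial.2
    ((nontrivial_iff_ne_singleton ht).2 hN)) t
  set A := (N.erase t).erase xs
  have hxsA : xs ∉ A := notMem_erase xs _
  have hxs' : xs ∈ N.erase t := mem_erase.2 ⟨hxst, hxs⟩
  have htA : t ∉ insert xs A := by simp [A, hxst.symm]
  have hA : #A + 2 = #N := by
    rw [card_erase_of_mem hxs', card_erase_of_mem ht]
    have := card_pos.2 ⟨t, ht⟩
    have := card_pos.2 ⟨xs, hxs'⟩
    rw [card_erase_of_mem ht] at this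
    omega
  obtain ⟨β, hβ⟩ := exists_isAdmissible (P := P) (bad := bad) (c := c) hR A (by omega)
  -- whether `c t + β t = p₀ + ∑ β` does not depend on `β t`; the value at `xs` prevents it
  obtain ⟨b, hbE, hb⟩ := hβ.exists_insert hR hxsA {c t - (p₀ + ∑ y ∈ A, β y)}
    (by rw [card_singleton]; omega)
  obtain ⟨b', hb', hbD⟩ := hb.exists_insert_add_sum_notMem hR htA p₀ D
    (by rw [card_insert_of_notMem hxsA]; omega)
  have hNeq : insert t (insert xs A) = N := by rw [insert_erase hxs', insert_erase ht]
  rw [sum_insert_update hxsA] at hbD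
  have hsum : ∑ x ∈ N, Function.update (Function.update β xs b) t b' x =
      b' + (b + ∑ y ∈ A, β y) := by
    rw [← hNeq, sum_insert_update htA, sum_insert_update hxsA]
  rw [hNeq] at hb'
  refine ⟨_, hb', by rwa [hsum], ?_⟩
  rw [hsum, Function.update_self]
  simp only [mem_singleton] at hbE
  omega

theorem exists_isAdmissible_of_two_le_card (hR : ∀ x, (R.neighborSet x).Subsingleton)
    {N T : Finset V} (hTN : T ⊆ N) (hT : 2 ≤ #T) (hRT : ∀ x y, R.Adj x y → x ∉ T)
    (hP : ∀ n ∈ P, 0 < n) (hNP : #N + 4 ≤ #P) (p₀ : ℕ) (D : Finset ℕ) (hD : #D ≤ 2)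
    (hc : ∀ t₁ ∈ T, ∀ t₂ ∈ T, c t₁ = c t₂ → c t₁ ≠ 0 → t₁ = t₂) :
    ∃ β, IsAdmissible P bad c R N β ∧ p₀ + ∑ x ∈ N, β x ∉ D ∧
      ∀ t ∈ T, c t + β t ≠ p₀ + ∑ x ∈ N, β x := by
  have hNT := card_sdiff_of_subset hTN
  have := card_le_card hTN
  obtain ⟨β₀, hinj₀, hmem₀, hadj₀⟩ := exists_isAdmissible (P := P) (bad := bad) (c := c) hR
    (N \ T) (by omega)
  have hQ : #T + 4 ≤ #(P \ (N \ T).image β₀) := by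
    have := le_card_sdiff ((N \ T).image β₀) P
    have := card_image_le (s := N \ T) (f := β₀)
    omega
  obtain ⟨β₁, hinj₁, hmem₁, hsum₁, hcpl₁⟩ := exists_injOn_add_ne_add_sum T hT _
    (fun n hn => hP n (mem_sdiff.1 hn).1) hQ (p₀ + ∑ x ∈ N \ T, β₀ x) D hD c hc bad
  set β := fun x => if x ∈ T then β₁ x else β₀ x
  have hβ₀ : ∀ x ∈ N \ T, β x = β₀ x := fun x hx => if_neg (mem_sdiff.1 hx).2
  have hβ₁ : ∀ t ∈ T, β t = β₁ t := fun t ht => if_pos ht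
  have hsum : p₀ + ∑ x ∈ N, β x = p₀ + ∑ x ∈ N \ T, β₀ x + ∑ t ∈ T, β₁ t := by
    rw [← sum_sdiff hTN, sum_congr rfl hβ₀, sum_congr rfl hβ₁, add_assoc]
  have hβ₁Q : ∀ t ∈ T, β₁ t ∈ P ∧ β₁ t ∉ (N \ T).image β₀ := fun t ht =>
    mem_sdiff.1 (hmem₁ t ht).1
  refine ⟨β, ⟨?_, fun x hx => ?_, fun x hx y hy hxy => ?_⟩, by rwa [hsum],
    fun t ht => by rw [hsum, hβ₁ t ht]; exact hcpl₁ t ht⟩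
  · rw [← sdiff_union_of_subset hTN, coe_union,
      Set.injOn_union (disjoint_coe.2 sdiff_disjoint)]
    refine ⟨fun x hx y hy hxy => hinj₀ hx hy ?_, fun x hx y hy hxy => hinj₁ hx hy ?_,
      fun x hx y hy hxy => (hβ₁Q y hy).2 (mem_image.2 ⟨x, hx, ?_⟩)⟩
    · rwa [hβ₀ x hx, hβ₀ y hy] at hxy
    · rwa [hβ₁ x hx, hβ₁ y hy] at hxy
    · rw [← hβ₀ x hx, hxy, hβ₁ y hy]
  · by_cases hxT : x ∈ T
    · rw [hβ₁ x hxT]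
      exact ⟨(hβ₁Q x hxT).1, (hmem₁ x hxT).2⟩
    · rw [hβ₀ x (mem_sdiff.2 ⟨hx, hxT⟩)]
      exact hmem₀ x (mem_sdiff.2 ⟨hx, hxT⟩)
  · have hx' : x ∈ N \ T := mem_sdiff.2 ⟨hx, hRT x y hxy⟩
    have hy' : y ∈ N \ T := mem_sdiff.2 ⟨hy, hRT y x hxy.symm⟩
    rw [hβ₀ x hx', hβ₀ y hy']
    exact hadj₀ x hx' y hy' hxy

/-- `N`: the unprocessed neighbours of the vertex being processed, whose sum is `p₀`; `D`: the sums
of its processed neighbours; `T`: the vertices of `N` that become final; `c`: the current sums;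
`bad x`: the weight that would give `x` the sum of a neighbour `y ∉ N` with which `xy` is the only
unweighted edge left; `R`: the edges inside `N` that become isolated. -/
theorem exists_isAdmissible_star (hR : ∀ x, (R.neighborSet x).Subsingleton)
    {N T : Finset V} (hTN : T ⊆ N) (hRT : ∀ x y, R.Adj x y → x ∉ T)
    (hP : ∀ n ∈ P, 0 < n) (hNP : #N + 4 ≤ #P) (p₀ : ℕ) (D : Finset ℕ) (hD : #D ≤ 2)
    (hc : ∀ t₁ ∈ T, ∀ t₂ ∈ T, c t₁ = c t₂ → c t₁ ≠ 0 → t₁ = t₂)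
    (hempty : N = ∅ → p₀ ∉ D) (hsingle : ∀ t ∈ T, N = {t} → c t ≠ p₀) :
    ∃ β, IsAdmissible P bad c R N β ∧ p₀ + ∑ x ∈ N, β x ∉ D ∧
      ∀ t ∈ T, c t + β t ≠ p₀ + ∑ x ∈ N, β x := by
  obtain hT | hT | hT : #T = 0 ∨ #T = 1 ∨ 2 ≤ #T := by omega
  · obtain ⟨β, hβ, hβD⟩ := exists_isAdmissible_add_sum_notMem hR N hNP p₀ D hD hempty
    exact ⟨β, hβ, hβD, by simp [card_eq_zero.1 hT]⟩
  · obtain ⟨t, rfl⟩ := card_eq_one.1 hT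
    have ht := hTN (mem_singleton_self t)
    obtain ⟨β, hβ, hβD, hβt⟩ :=
      exists_isAdmissible_of_single hR ht hNP p₀ D hD (hsingle t (mem_singleton_self t))
    exact ⟨β, hβ, hβD, by simpa using hβt⟩
  · exact exists_isAdmissible_of_two_le_card hR hTN hT hRT hP hNP p₀ D hD hc

end StarWeights

section Pending

variable {V : Type*} (G : SimpleGraph V)

/-- No edge inside `S` (an unweighted edge) meets `u` or `v` except possibly `uv`, so the sums at
`u` and `v` will change by the same amount. -/
def OnlyPendingEdge (S : Finset V) (u v : V) : Prop :=
  (u ∈ S → ∀ z ∈ S, G.Adj u z → z = v) ∧ (v ∈ S → ∀ z ∈ S, G.Adj v z → z = u)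

variable {G}

theorem OnlyPendingEdge.symm {S : Finset V} {u v : V} (h : OnlyPendingEdge G S u v) :
    OnlyPendingEdge G S v u :=
  And.symm h

variable (G) in
def isolatedEdgeGraph (s : Finset V) : SimpleGraph V where
  Adj x y := G.Adj x y ∧ x ∈ s ∧ y ∈ s ∧ OnlyPendingEdge G s x y
  symm := ⟨fun _ _ h => ⟨h.1.symm, h.2.2.1, h.2.1, h.2.2.2.symm⟩⟩
  loopless := ⟨fun x h => G.loopless.irrefl x h.1⟩

theorem isolatedEdgeGraph_neighborSet_subsingleton (s : Finset V) (x : V) :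
    ((isolatedEdgeGraph G s).neighborSet x).Subsingleton :=
  fun _ hy z hz => (hy.2.2.2.1 hy.2.1 z hz.2.2.1 hz.1).symm

section Insert

variable {s N : Finset V} {a : V}

theorem exists_eq_mk_of_mem_sym2_insert (hN : ∀ x, x ∈ N ↔ x ∈ s ∧ G.Adj a x) {e : Sym2 V}
    (he : e ∈ G.edgeSet) (hS : e ∈ (insert a s).sym2) (hs : e ∉ s.sym2) :
    ∃ x ∈ N, e = s(a, x) := by
  induction e using Sym2.ind with | h u v => ?_
  rw [mk_mem_sym2_iff, mem_insert, mem_insert] at hS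
  rw [mk_mem_sym2_iff] at hs
  rw [SimpleGraph.mem_edgeSet] at he
  rcases hS with ⟨rfl | hu, rfl | hv⟩
  · exact absurd he (G.loopless.irrefl _)
  · exact ⟨v, (hN v).2 ⟨hv, he⟩, rfl⟩
  · exact ⟨u, (hN u).2 ⟨hu, he.symm⟩, Sym2.eq_swap⟩
  · exact absurd ⟨hu, hv⟩ hs

theorem OnlyPendingEdge.insert_of_nonadj (hN : ∀ x, x ∈ N ↔ x ∈ s ∧ G.Adj a x) {u v : V}
    (h : OnlyPendingEdge G s u v) (hu : ¬(u = a ∨ u ∈ N)) (hv : ¬(v = a ∨ v ∈ N)) :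
    OnlyPendingEdge G (insert a s) u v := by
  have key : ∀ x y, OnlyPendingEdge G s x y → ¬(x = a ∨ x ∈ N) →
      x ∈ insert a s → ∀ z ∈ insert a s, G.Adj x z → z = y := by
    intro x y hxy hx hxS z hz hxz
    have hxs := (mem_insert.1 hxS).resolve_left (not_or.1 hx).1
    rcases mem_insert.1 hz with rfl | hzs
    · exact absurd (Or.inr ((hN x).2 ⟨hxs, hxz.symm⟩)) hx
    · exact hxy.1 hxs z hzs hxz
  exact ⟨key u v h hu, key v u h.symm hv⟩

theorem onlyPendingEdge_insert_self {y : V} (hay : ∀ z ∈ s, G.Adj a z → z = y)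
    (hys : y ∈ s → ∀ z ∈ s, ¬ G.Adj y z) : OnlyPendingEdge G (insert a s) a y := by
  refine ⟨fun _ z hz haz => ?_, fun hy z hz hyz => ?_⟩ <;> rcases mem_insert.1 hz with rfl | hzs
  · exact absurd haz (G.loopless.irrefl _)
  · exact hay z hzs haz
  · rfl
  · rcases mem_insert.1 hy with rfl | hys'
    · exact hay z hzs hyz
    · exact absurd hyz (hys hys' z hzs)

end Insert

end Pending

section Outer

variable {V : Type*} [Fintype V] (G : SimpleGraph V)

noncomputable def outerNeighborFinset (S : Finset V) (x : V) : Finset V :=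
  {y | G.Adj x y ∧ y ∉ S}

variable {G}

theorem mem_outerNeighborFinset {S : Finset V} {x y : V} :
    y ∈ outerNeighborFinset G S x ↔ G.Adj x y ∧ y ∉ S := by
  simp [outerNeighborFinset]

theorem vSum_eq_sum_outerNeighborFinset {S : Finset V} {w : Sym2 V → ℕ}
    (hw : ∀ e ∈ G.edgeSet, e ∈ S.sym2 → w e = 0) {x : V} (hx : x ∈ S) :
    vSum G w x = ∑ y ∈ outerNeighborFinset G S x, w s(x, y) := by
  refine (sum_subset (fun y hy => ?_) fun y hy hy' => ?_).symm
  · simpa using (mem_outerNeighborFinset.1 hy).1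
  · simp only [mem_outerNeighborFinset, mem_filter, mem_univ, true_and, not_and, not_not]
      at hy hy'
    exact hw _ hy (mk_mem_sym2_iff.2 ⟨hx, hy' hy⟩)

theorem exists_vSum_eq_weight {S : Finset V} {w : Sym2 V → ℕ}
    (hw : ∀ e ∈ G.edgeSet, e ∈ S.sym2 → w e = 0) {x : V} (hx : x ∈ S)
    (hout : #(outerNeighborFinset G S x) ≤ 1) (hne : vSum G w x ≠ 0) :
    ∃ y, G.Adj x y ∧ y ∉ S ∧ vSum G w x = w s(x, y) := by
  rw [vSum_eq_sum_outerNeighborFinset hw hx] at hne ⊢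
  obtain ⟨y, hy, -⟩ := exists_ne_zero_of_sum_ne_zero hne
  exact ⟨y, (mem_outerNeighborFinset.1 hy).1, (mem_outerNeighborFinset.1 hy).2,
    sum_eq_single_of_mem y hy fun z hz hzy => absurd (card_le_one.1 hout z hz y hy) hzy⟩

end Outer

section AddStar

variable {V : Type*}

noncomputable def addStar (w : Sym2 V → ℕ) (a : V) (N : Finset V) (β : V → ℕ) :
    Sym2 V → ℕ :=
  fun e => w e + ∑ x ∈ N, if e = s(a, x) then β x else 0

theorem addStar_apply_of_forall_ne {w : Sym2 V → ℕ} {a : V} {N : Finset V} {β : V → ℕ}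
    {e : Sym2 V} (he : ∀ x ∈ N, e ≠ s(a, x)) : addStar w a N β e = w e := by
  simp [addStar, sum_ite_of_false he]

theorem addStar_apply_mk {w : Sym2 V → ℕ} {a : V} {N : Finset V} (β : V → ℕ) {x : V}
    (hx : x ∈ N) : addStar w a N β s(a, x) = w s(a, x) + β x := by
  rw [addStar, sum_eq_single_of_mem x hx fun x' _ hne => if_neg fun h =>
    hne (Sym2.congr_right.1 h).symm, if_pos rfl]

theorem vSum_addStar [Fintype V] {G : SimpleGraph V} (w : Sym2 V → ℕ) {a : V} {N : Finset V}
    (hN : ∀ x ∈ N, G.Adj a x) (β : V → ℕ) (y : V) :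
    vSum G (addStar w a N β) y =
      vSum G w y + (if y = a then ∑ x ∈ N, β x else 0) + (if y ∈ N then β y else 0) := by
  have hstar : ∀ x ∈ N, ∑ z ∈ {z | G.Adj y z}, (if s(y, z) = s(a, x) then β x else 0) =
      (if y = a then β x else 0) + (if x = y then β x else 0) := by
    intro x hx
    have hax := hN x hx
    by_cases hya : y = a
    · subst hya
      simp only [Sym2.congr_right, sum_ite_eq', mem_filter, mem_univ, true_and, hax,
        if_true, hax.ne', if_false, add_zero]
    by_cases hyx : x = y
    · subst hyx
      simp only [Sym2.eq_swap (a := a), Sym2.congr_right, sum_ite_eq', mem_filter, mem_univ,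
        true_and, hax.symm, if_true, hya, if_false, zero_add]
    · have : ∀ z, s(y, z) ≠ s(a, x) := fun z h => by
        rcases Sym2.eq_iff.1 h with ⟨h, -⟩ | ⟨h, -⟩
        exacts [hya h, hyx h.symm]
      simp [this, hya, hyx]
  simp only [vSum, addStar, sum_add_distrib]
  rw [sum_comm, sum_congr rfl hstar, sum_add_distrib, sum_ite_eq', add_assoc]
  congr 2
  split_ifs <;> simp

end AddStar

section Stage

variable {V : Type*} [Fintype V] (G : SimpleGraph V)

/-- The vertices of `S` are those still to be processed: the edges inside `S` are unweighted
(weight `0`), the other edges carry distinct weights from `W` outside the pool `P` of unused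
weights. -/
structure Stage (W : Finset ℕ) (S : Finset V) (P : Finset ℕ) (w : Sym2 V → ℕ) : Prop where
  pool_subset : P ⊆ W
  card_pool : #(G.edgeFinset ∩ S.sym2) + 4 ≤ #P
  weight_pending : ∀ e ∈ G.edgeSet, e ∈ S.sym2 → w e = 0
  weight_mem : ∀ e ∈ G.edgeSet, e ∉ S.sym2 → w e ∈ W \ P
  injOn_weight : Set.InjOn w {e | e ∈ G.edgeSet ∧ e ∉ S.sym2}
  vSum_ne : ∀ u v, G.Adj u v → OnlyPendingEdge G S u v → vSum G w u ≠ vSum G w v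

variable {G}

theorem OnlyPendingEdge.degG_eq_one {u v : V} (h : OnlyPendingEdge G univ u v)
    (huv : G.Adj u v) : degG G u = 1 :=
  card_eq_one.2 ⟨v, eq_singleton_iff_unique_mem.2 ⟨by simpa using huv,
    fun z hz => h.1 (mem_univ u) z (mem_univ z) (by simpa using hz)⟩⟩

theorem stage_univ (hnice : Nice G) {W : Finset ℕ} (hW : #W = G.edgeSet.ncard + 4) :
    Stage G W univ W 0 where
  pool_subset := subset_rfl
  card_pool := by
    rw [sym2_univ, inter_univ, hW, Set.ncard_eq_toFinset_card', Set.toFinset_card,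
      SimpleGraph.edgeFinset_card]
  weight_pending _ _ _ := rfl
  weight_mem _ _ he := absurd (mem_sym2_iff.2 fun _ _ => mem_univ _) he
  injOn_weight _ he := absurd (mem_sym2_iff.2 fun _ _ => mem_univ _) he.2
  vSum_ne u v huv h := (hnice u v huv ⟨h.degG_eq_one huv, h.symm.degG_eq_one huv.symm⟩).elim

theorem Stage.weighting_of_empty {W P : Finset ℕ} {w : Sym2 V → ℕ} (h : Stage G W ∅ P w) :
    Set.InjOn w G.edgeSet ∧ Set.MapsTo w G.edgeSet W ∧ NSD G w := by
  have hnot : ∀ e, e ∉ (∅ : Finset V).sym2 := fun e => by simp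
  refine ⟨fun e he f hf => h.injOn_weight ⟨he, hnot e⟩ ⟨hf, hnot f⟩,
    fun e he => (mem_sdiff.1 (h.weight_mem e he (hnot e))).1,
    fun u v huv => h.vSum_ne u v huv ⟨fun hu => absurd hu (notMem_empty u),
      fun hv => absurd hv (notMem_empty v)⟩⟩

end Stage

section Erase

variable {V : Type*} [Fintype V] {G : SimpleGraph V} {s N : Finset V} {a : V}

theorem card_edgeFinset_inter_sym2_add_le (ha : a ∉ s) (hN : ∀ x, x ∈ N ↔ x ∈ s ∧ G.Adj a x) :
    #(G.edgeFinset ∩ s.sym2) + #N ≤ #(G.edgeFinset ∩ (insert a s).sym2) := by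
  have hinj : Set.InjOn (fun x => s(a, x)) N := fun x _ y _ h => Sym2.congr_right.1 h
  rw [← card_image_of_injOn hinj, ← card_union_of_disjoint]
  · refine card_le_card (union_subset (inter_subset_inter_left (sym2_mono (subset_insert a s)))
      fun e he => ?_)
    obtain ⟨x, hx, rfl⟩ := mem_image.1 he
    obtain ⟨hxs, hax⟩ := (hN x).1 hx
    simp [hax, hxs]
  · refine disjoint_left.2 fun e he he' => ?_
    obtain ⟨x, -, rfl⟩ := mem_image.1 he'
    exact ha (mk_mem_sym2_iff.1 (mem_inter.1 he).2).1

theorem Stage.addStar_eq_or_exists {W P : Finset ℕ} {w : Sym2 V → ℕ}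
    (h : Stage G W (insert a s) P w) (hN : ∀ x, x ∈ N ↔ x ∈ s ∧ G.Adj a x) (β : V → ℕ)
    {e : Sym2 V} (he : e ∈ G.edgeSet) (hs : e ∉ s.sym2) :
    (e ∉ (insert a s).sym2 ∧ addStar w a N β e = w e) ∨
      ∃ x ∈ N, e = s(a, x) ∧ addStar w a N β e = β x := by
  by_cases hS : e ∈ (insert a s).sym2
  · obtain ⟨x, hx, rfl⟩ := exists_eq_mk_of_mem_sym2_insert hN he hS hs
    refine Or.inr ⟨x, hx, rfl, ?_⟩
    rw [addStar_apply_mk β hx, h.weight_pending _ he hS, zero_add]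
  · refine Or.inl ⟨hS, addStar_apply_of_forall_ne fun x hx hex => hS (hex ▸ ?_)⟩
    exact mk_mem_sym2_iff.2 ⟨mem_insert_self a s, mem_insert_of_mem ((hN x).1 hx).1⟩

theorem Stage.erase {W P : Finset ℕ} {w : Sym2 V → ℕ} (h : Stage G W (insert a s) P w)
    (ha : a ∉ s) (hN : ∀ x, x ∈ N ↔ x ∈ s ∧ G.Adj a x) {β : V → ℕ} (hinj : Set.InjOn β N)
    (hP : ∀ x ∈ N, β x ∈ P)
    (hnew : ∀ u v, G.Adj u v → OnlyPendingEdge G s u v → u = a ∨ u ∈ N →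
      vSum G (addStar w a N β) u ≠ vSum G (addStar w a N β) v) :
    Stage G W s (P \ N.image β) (addStar w a N β) := by
  have hNP : N.image β ⊆ P := image_subset_iff.2 hP
  refine ⟨sdiff_subset.trans h.pool_subset, ?_, fun e he hs => ?_, fun e he hs => ?_, ?_, ?_⟩
  · have := card_edgeFinset_inter_sym2_add_le ha hN
    have := h.card_pool
    rw [card_sdiff_of_subset hNP, card_image_of_injOn hinj]
    have := card_le_card (inter_subset_left (s₁ := G.edgeFinset) (s₂ := (insert a s).sym2))
    omega
  · rw [addStar_apply_of_forall_ne fun x hx hex =>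
      ha (mk_mem_sym2_iff.1 (hex ▸ hs : s(a, x) ∈ s.sym2)).1]
    exact h.weight_pending e he (sym2_mono (subset_insert a s) hs)
  · rcases h.addStar_eq_or_exists hN β he hs with ⟨hS, hval⟩ | ⟨x, hx, rfl, hval⟩ <;> rw [hval]
    · obtain ⟨hW, hP'⟩ := mem_sdiff.1 (h.weight_mem e he hS)
      exact mem_sdiff.2 ⟨hW, fun h' => hP' (mem_sdiff.1 h').1⟩
    · exact mem_sdiff.2 ⟨h.pool_subset (hP x hx),
        fun h' => (mem_sdiff.1 h').2 (mem_image_of_mem β hx)⟩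
  · intro e₁ he₁ e₂ he₂ heq
    rcases h.addStar_eq_or_exists hN β he₁.1 he₁.2 with ⟨hS₁, hv₁⟩ | ⟨x₁, hx₁, rfl, hv₁⟩ <;>
    rcases h.addStar_eq_or_exists hN β he₂.1 he₂.2 with ⟨hS₂, hv₂⟩ | ⟨x₂, hx₂, rfl, hv₂⟩ <;>
    rw [hv₁, hv₂] at heq
    · exact h.injOn_weight ⟨he₁.1, hS₁⟩ ⟨he₂.1, hS₂⟩ heq
    · exact absurd (heq ▸ hP x₂ hx₂) (mem_sdiff.1 (h.weight_mem _ he₁.1 hS₁)).2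
    · exact absurd (heq.symm ▸ hP x₁ hx₁) (mem_sdiff.1 (h.weight_mem _ he₂.1 hS₂)).2
    · rw [hinj hx₁ hx₂ heq]
  · intro u v huv hpend
    by_cases hu : u = a ∨ u ∈ N
    · exact hnew u v huv hpend hu
    by_cases hv : v = a ∨ v ∈ N
    · exact (hnew v u huv.symm hpend.symm hv).symm
    have hNa : ∀ x ∈ N, G.Adj a x := fun x hx => ((hN x).1 hx).2
    rw [vSum_addStar w hNa, vSum_addStar w hNa, if_neg (not_or.1 hu).1, if_neg (not_or.1 hu).2,
      if_neg (not_or.1 hv).1, if_neg (not_or.1 hv).2, add_zero, add_zero, add_zero, add_zero]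
    exact h.vSum_ne u v huv (hpend.insert_of_nonadj hN hu hv)

end Erase

theorem exists_forall_eq_of_unique {α β γ : Type*} [Inhabited γ] (p : α → β → Prop)
    (g : α → β → γ) (h : ∀ x, {y | p x y}.Subsingleton) :
    ∃ f : α → γ, ∀ x y, p x y → f x = g x y := by
  classical
  refine ⟨fun x => if hx : ∃ y, p x y then g x hx.choose else default, fun x y hxy => ?_⟩
  have hx : ∃ y, p x y := ⟨y, hxy⟩
  dsimp only
  rw [dif_pos hx, h x hx.choose_spec hxy]

section Step

variable {V : Type*} [Fintype V] {G : SimpleGraph V} {s N : Finset V} {a : V}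

theorem Stage.eq_of_vSum_eq {W P : Finset ℕ} {S : Finset V} {w : Sym2 V → ℕ}
    (h : Stage G W S P w) {t₁ t₂ : V} (ht₁ : t₁ ∈ S) (ht₂ : t₂ ∈ S)
    (hout₁ : #(outerNeighborFinset G S t₁) ≤ 1) (hout₂ : #(outerNeighborFinset G S t₂) ≤ 1)
    (heq : vSum G w t₁ = vSum G w t₂) (hne : vSum G w t₁ ≠ 0) : t₁ = t₂ := by
  obtain ⟨y₁, h₁, hy₁, e₁⟩ := exists_vSum_eq_weight h.weight_pending ht₁ hout₁ hne
  obtain ⟨y₂, h₂, hy₂, e₂⟩ := exists_vSum_eq_weight h.weight_pending ht₂ hout₂ (heq ▸ hne)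
  have hnot : ∀ t y, y ∉ S → s(t, y) ∉ S.sym2 := fun t y hy h => hy (mk_mem_sym2_iff.1 h).2
  rcases Sym2.eq_iff.1 (h.injOn_weight ⟨h₁, hnot _ _ hy₁⟩ ⟨h₂, hnot _ _ hy₂⟩
    (e₁ ▸ e₂ ▸ heq)) with ⟨h, -⟩ | ⟨h, -⟩
  · exact h
  · exact absurd (h ▸ ht₁) hy₂

theorem OnlyPendingEdge.eq_of_card_outerNeighborFinset_le_one {x y z : V} (hx : x ∈ s)
    (hout : #(outerNeighborFinset G (insert a s) x) ≤ 1) (hxy : G.Adj x y) (hxz : G.Adj x z)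
    (hya : y ≠ a) (hza : z ≠ a) (hy : OnlyPendingEdge G s x y) (hz : OnlyPendingEdge G s x z) :
    y = z := by
  by_cases hys : y ∈ s
  · exact hz.1 hx y hys hxy
  by_cases hzs : z ∈ s
  · exact (hy.1 hx z hzs hxz).symm
  exact card_le_one.1 hout y (by simp [mem_outerNeighborFinset, *]) z
    (by simp [mem_outerNeighborFinset, *])

theorem vSum_addStar_ne {w : Sym2 V → ℕ} {β : V → ℕ} (ha : a ∉ s)
    (hN : ∀ x, x ∈ N ↔ x ∈ s ∧ G.Adj a x)
    (hcentre : ∀ y ∈ outerNeighborFinset G (insert a s) a,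
      vSum G w a + ∑ x ∈ N, β x ≠ vSum G w y)
    (hleaf : ∀ t ∈ N, (∀ y ∈ s, ¬ G.Adj t y) →
      vSum G w t + β t ≠ vSum G w a + ∑ x ∈ N, β x)
    (hpair : ∀ x ∈ N, ∀ y ∈ N, G.Adj x y → OnlyPendingEdge G s x y →
      vSum G w x + β x ≠ vSum G w y + β y)
    (hpartner : ∀ x ∈ N, ∀ y, G.Adj x y → y ∉ N → y ≠ a → OnlyPendingEdge G s x y →
      vSum G w x + β x ≠ vSum G w y)
    (u v : V) (huv : G.Adj u v) (hpend : OnlyPendingEdge G s u v) (hu : u = a ∨ u ∈ N) :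
    vSum G (addStar w a N β) u ≠ vSum G (addStar w a N β) v := by
  have hsum := vSum_addStar w (fun x hx => ((hN x).1 hx).2) β
  have haN : a ∉ N := fun h => ha ((hN a).1 h).1
  have hcentre' : ∀ v, G.Adj a v → OnlyPendingEdge G s a v →
      vSum G (addStar w a N β) a ≠ vSum G (addStar w a N β) v := by
    intro v hav hpend
    rw [hsum, hsum, if_pos rfl, if_neg haN, if_neg hav.ne']
    by_cases hvs : v ∈ s
    · have hvN : v ∈ N := (hN v).2 ⟨hvs, hav⟩
      rw [if_pos hvN, add_zero]
      exact (hleaf v hvN fun y hy hvy => ha (hpend.2 hvs y hy hvy ▸ hy)).symm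
    · rw [if_neg fun h => hvs ((hN v).1 h).1, add_zero, add_zero]
      exact hcentre v (mem_outerNeighborFinset.2 ⟨hav, by simp [hvs, hav.ne']⟩)
  rcases hu with rfl | hu
  · exact hcentre' v huv hpend
  by_cases hva : v = a
  · subst hva
    exact (hcentre' u huv.symm hpend.symm).symm
  rw [hsum, hsum, if_neg (ne_of_mem_of_not_mem hu haN), if_neg hva, if_pos hu, add_zero,
    add_zero]
  by_cases hvN : v ∈ N
  · rw [if_pos hvN]
    exact hpair u hu v hvN huv hpend
  · rw [if_neg hvN, add_zero]
    exact hpartner u hu v huv hvN hva hpend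

theorem Stage.exists_erase {W P : Finset ℕ} {w : Sym2 V → ℕ} (hW : ∀ n ∈ W, 0 < n)
    (h : Stage G W (insert a s) P w) (ha : a ∉ s)
    (hout_a : #(outerNeighborFinset G (insert a s) a) ≤ 2)
    (hout : ∀ x ∈ s, G.Adj a x → #(outerNeighborFinset G (insert a s) x) ≤ 1) :
    ∃ P' w', Stage G W s P' w' := by
  set N := {x ∈ s | G.Adj a x}
  have hN : ∀ x, x ∈ N ↔ x ∈ s ∧ G.Adj a x := fun x => mem_filter
  set T := {x ∈ N | ∀ y ∈ s, ¬ G.Adj x y}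
  obtain ⟨bad, hbad⟩ := exists_forall_eq_of_unique
    (fun x y => x ∈ N ∧ G.Adj x y ∧ y ∉ N ∧ y ≠ a ∧ OnlyPendingEdge G s x y)
    (fun x y => vSum G w y - vSum G w x) fun x y ⟨hxN, hxy, _, hya, hy⟩ z ⟨_, hxz, _, hza, hz⟩ =>
      hy.eq_of_card_outerNeighborFinset_le_one ((hN x).1 hxN).1
        (hout x ((hN x).1 hxN).1 ((hN x).1 hxN).2) hxy hxz hya hza hz
  have hTs : ∀ t ∈ T, t ∈ s ∧ G.Adj a t := fun t ht => (hN t).1 (mem_filter.1 ht).1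
  have hempty : N = ∅ → vSum G w a ∉ (outerNeighborFinset G (insert a s) a).image (vSum G w) := by
    intro hN0 hmem
    obtain ⟨y, hy, hyeq⟩ := mem_image.1 hmem
    obtain ⟨hay, hyS⟩ := mem_outerNeighborFinset.1 hy
    refine h.vSum_ne a y hay (onlyPendingEdge_insert_self (fun z hz haz => ?_)
      fun hys => absurd (mem_insert_of_mem hys) hyS) hyeq.symm
    exact absurd (hN0 ▸ (hN z).2 ⟨hz, haz⟩) (notMem_empty z)
  have hsingle : ∀ t ∈ T, N = {t} → vSum G w t ≠ vSum G w a := fun t ht hNt =>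
    (h.vSum_ne a t (hTs t ht).2 (onlyPendingEdge_insert_self
      (fun z hz haz => mem_singleton.1 (hNt ▸ (hN z).2 ⟨hz, haz⟩))
      fun _ => (mem_filter.1 ht).2)).symm
  obtain ⟨β, ⟨hinj, hmem, hpair⟩, hD, hT⟩ := exists_isAdmissible_star
    (P := P) (bad := bad) (c := vSum G w) (R := isolatedEdgeGraph G s)
    (isolatedEdgeGraph_neighborSet_subsingleton s) (filter_subset _ N)
    (fun x y hxy (hxT : x ∈ T) => (mem_filter.1 hxT).2 y hxy.2.2.1 hxy.1)
    (fun n hn => hW n (h.pool_subset hn))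
    (by have := card_edgeFinset_inter_sym2_add_le ha hN; have := h.card_pool; omega)
    (vSum G w a) _ (card_image_le.trans hout_a)
    (fun t₁ ht₁ t₂ ht₂ => h.eq_of_vSum_eq (mem_insert_of_mem (hTs t₁ ht₁).1)
      (mem_insert_of_mem (hTs t₂ ht₂).1) (hout t₁ (hTs t₁ ht₁).1 (hTs t₁ ht₁).2)
      (hout t₂ (hTs t₂ ht₂).1 (hTs t₂ ht₂).2))
    hempty hsingle
  refine ⟨_, _, h.erase ha hN hinj (fun x hx => (hmem x hx).1) (vSum_addStar_ne ha hN
    (fun y hy heq => hD (heq ▸ mem_image_of_mem _ hy))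
    (fun t ht hts => hT t (mem_filter.2 ⟨ht, hts⟩))
    (fun x hx y hy hxy hpend => hpair x hx y hy ⟨hxy, ((hN x).1 hx).1, ((hN y).1 hy).1, hpend⟩)
    fun x hx y hxy hyN hya hpend => ?_)⟩
  have := hbad x y ⟨hx, hxy, hyN, hya, hpend⟩
  have := (hmem x hx).2
  omega

end Step

section Degenerate

variable {V : Type*} (G : SimpleGraph V) (k : ℕ)

theorem exists_mem_card_filter_adj_le
    (hdegen : ∀ H : G.Subgraph, H.verts.Nonempty → ∃ v ∈ H.verts, (H.neighborSet v).ncard ≤ k)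
    {S : Finset V} (hS : S.Nonempty) : ∃ v ∈ S, #{y ∈ S | G.Adj v y} ≤ k := by
  obtain ⟨v, hvS, hv⟩ := hdegen ((⊤ : G.Subgraph).induce S) (by simpa using hS)
  replace hvS : v ∈ S := by simpa using hvS
  refine ⟨v, hvS, ?_⟩
  convert hv using 1
  rw [← Set.ncard_coe_finset]
  congr 1
  ext y
  simp [hvS]

theorem exists_rank_of_exists_card_filter_adj_le [Fintype V]
    (hdeg : ∀ S : Finset V, S.Nonempty → ∃ v ∈ S, #{y ∈ S | G.Adj v y} ≤ k) :
    ∃ rank : V → ℕ, Function.Injective rank ∧ ∀ x, #{y | G.Adj x y ∧ rank x < rank y} ≤ k := by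
  suffices ∀ S : Finset V, ∃ rank : V → ℕ, Set.InjOn rank S ∧
      ∀ x ∈ S, #{y ∈ S | G.Adj x y ∧ rank x < rank y} ≤ k by
    obtain ⟨rank, hinj, hk⟩ := this univ
    exact ⟨rank, fun x y hxy => hinj (mem_univ x) (mem_univ y) hxy,
      fun x => by simpa using hk x (mem_univ x)⟩
  intro S
  induction S using Finset.strongInduction with | H S ih => ?_
  rcases S.eq_empty_or_nonempty with rfl | hS
  · exact ⟨0, by simp, by simp⟩
  obtain ⟨v, hvS, hv⟩ := hdeg S hS
  obtain ⟨r, hinj, hr⟩ := ih (S.erase v) (erase_ssubset hvS)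
  refine ⟨fun x => if x = v then 0 else r x + 1, fun x hx y hy hxy => ?_, fun x hx => ?_⟩
  · simp only at hxy
    by_cases hxv : x = v <;> by_cases hyv : y = v
    · rw [hxv, hyv]
    · rw [if_pos hxv, if_neg hyv] at hxy
      exact absurd hxy (by omega)
    · rw [if_neg hxv, if_pos hyv] at hxy
      exact absurd hxy (by omega)
    · rw [if_neg hxv, if_neg hyv] at hxy
      exact hinj (mem_erase.2 ⟨hxv, hx⟩) (mem_erase.2 ⟨hyv, hy⟩) (by omega)
  by_cases hxv : x = v
  · subst hxv
    refine (card_le_card fun y hy => ?_).trans hv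
    simp only [mem_filter] at hy ⊢
    exact ⟨hy.1, hy.2.1⟩
  · refine (card_le_card fun y hy => ?_).trans (hr x (mem_erase.2 ⟨hxv, hx⟩))
    simp only [mem_filter, if_neg hxv] at hy
    obtain ⟨hyS, hxy, hlt⟩ := hy
    have hyv : y ≠ v := fun h => by simp [h] at hlt
    simp only [if_neg hyv] at hlt
    exact mem_filter.2 ⟨mem_erase.2 ⟨hyv, hyS⟩, hxy, by omega⟩

end Degenerate

theorem exists_weighting_of_stage {V : Type*} [Fintype V] {G : SimpleGraph V} {W : Finset ℕ}
    (hW : ∀ n ∈ W, 0 < n) (rank : V → ℕ) (hrank : Function.Injective rank)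
    (hforward : ∀ x, #{y | G.Adj x y ∧ rank x < rank y} ≤ 2) (S : Finset V)
    (hup : ∀ x ∈ S, ∀ y ∉ S, G.Adj x y → rank x < rank y) {P : Finset ℕ} {w : Sym2 V → ℕ}
    (h : Stage G W S P w) :
    ∃ w', Set.InjOn w' G.edgeSet ∧ Set.MapsTo w' G.edgeSet W ∧ NSD G w' := by
  induction S using Finset.induction_on_max_value rank generalizing P w with
  | empty => exact ⟨w, h.weighting_of_empty⟩
  | insert a s ha hmax ih =>
    have hlt : ∀ x ∈ s, rank x < rank a := fun x hx =>
      (hmax x hx).lt_of_ne (hrank.ne (ne_of_mem_of_not_mem hx ha))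
    have hout : ∀ x ∈ insert a s, outerNeighborFinset G (insert a s) x ⊆
        ({y | G.Adj x y ∧ rank x < rank y} : Finset V) := fun x hx y hy => by
      obtain ⟨hxy, hyS⟩ := mem_outerNeighborFinset.1 hy
      simpa using ⟨hxy, hup x hx y hyS hxy⟩
    obtain ⟨P', w', h'⟩ := h.exists_erase hW ha
      ((card_le_card (hout a (mem_insert_self a s))).trans (hforward a))
      fun x hx hax => by
        have hsub : insert a (outerNeighborFinset G (insert a s) x) ⊆
            ({y | G.Adj x y ∧ rank x < rank y} : Finset V) :=
          insert_subset (by simpa using ⟨hax.symm, hlt x hx⟩) (hout x (mem_insert_of_mem hx))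
        have := (card_le_card hsub).trans (hforward x)
        rw [card_insert_of_notMem fun h => (mem_outerNeighborFinset.1 h).2
          (mem_insert_self a s)] at this
        omega
    refine ih (fun x hx y hy hxy => ?_) h'
    by_cases hya : y = a
    · exact hya ▸ hlt x hx
    · exact hup x (mem_insert_of_mem hx) y (by simp [hya, hy]) hxy

theorem stmt_13 {V : Type*} [Fintype V] (G : SimpleGraph V) (hnice : Nice G)
    (hdegen : ∀ H : G.Subgraph, H.verts.Nonempty → ∃ v ∈ H.verts, (H.neighborSet v).ncard ≤ 2) :
    (∀ W : Finset ℕ, (∀ x ∈ W, 0 < x) → W.card = G.edgeSet.ncard + 4 →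
        ∃ w : Sym2 V → ℕ, Set.InjOn w G.edgeSet ∧ Set.MapsTo w G.edgeSet ↑W ∧ NSD G w)
      ∧ chiE1 G ≤ G.edgeSet.ncard + 4 := by
  obtain ⟨rank, hrank, hforward⟩ := exists_rank_of_exists_card_filter_adj_le G 2
    fun S hS => exists_mem_card_filter_adj_le G 2 hdegen hS
  have hweights : ∀ W : Finset ℕ, (∀ x ∈ W, 0 < x) → W.card = G.edgeSet.ncard + 4 →
      ∃ w : Sym2 V → ℕ, Set.InjOn w G.edgeSet ∧ Set.MapsTo w G.edgeSet ↑W ∧ NSD G w :=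
    fun W hW hcard => exists_weighting_of_stage hW rank hrank hforward univ (by simp)
      (stage_univ hnice hcard)
  refine ⟨hweights, ?_⟩
  obtain ⟨w, hinj, hmaps, hnsd⟩ := hweights (Icc 1 (G.edgeSet.ncard + 4))
    (fun x hx => (mem_Icc.1 hx).1) (by simp)
  exact Nat.sInf_le ⟨w, fun e he => hmaps he, fun e he f hf h => hinj he hf h, hnsd⟩
end

section
/- Let G be a nice finite simple graph with maximum average degree at most 3, i.e., every non-empty subgraph H of G satisfies 2·|E(H)| ≤ 3·|V(H)|, and let m := |E(G)|. Then for every set W of m + 6 distinct strictly positive integers, there exists an edge-injective neighbour-sum-distinguishing edge-weighting of G with all weights taken from W (i.e., an injective map from E(G) into W that is neighbour-sum-distinguishing). In particular, χ^{e,1}_Σ(G) ≤ |E(G)| + 6. -/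
open scoped Classical
open Finset

/-!
Only the risky edges `uv` (both ends of degree at least 2, one of degree at least 3) can violate the
sum condition: at a pendant edge the end of degree 1 has the smaller sum, as weights are positive,
and at an edge between two vertices of degree 2 the two other edges at its ends carry distinct
weights. At a risky edge `e = uv` the condition says that the weights of the edges other than `e` at
`u` and at `v` have different sums. When the edges are weighted one by one, this constrains only the
last edge `f` of `adjEdges G e` to be weighted, and forbids at most one value for it.

It therefore suffices to order the edges so that each is the last one for at most six risky edges:
when `f` is weighted, fewer than `m` values are taken and at most six are forbidden. Such an order is
found by peeling off, from every nonempty set `H` of edges, an edge completing at most six sets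
`adjEdges G e ⊆ H`. If there were none, every edge `xy` of `H` would satisfy
`riskyDeg G H x + riskyDeg G H y ≥ 7`, where `riskyDeg G H x` counts the risky edges `e` at `x` with
`adjEdges G e ⊆ H`; a discharging argument then shows that these risky edges, together with the
edges of `H` between their endpoints, form a subgraph of average degree more than 3.
-/

noncomputable section

namespace NSDWeighting

variable {V : Type*}

def incident (F : Finset (Sym2 V)) (x : V) : Finset (Sym2 V) := {e ∈ F | x ∈ e}

theorem mem_incident {F : Finset (Sym2 V)} {x : V} {e : Sym2 V} :
    e ∈ incident F x ↔ e ∈ F ∧ x ∈ e :=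
  mem_filter

theorem incident_mono {F F' : Finset (Sym2 V)} (h : F ⊆ F') (x : V) :
    incident F x ⊆ incident F' x :=
  filter_subset_filter _ h

theorem sum_card_incident {F : Finset (Sym2 V)} {S : Finset V} (hF : ∀ e ∈ F, ¬e.IsDiag)
    (hS : ∀ e ∈ F, ∀ x ∈ e, x ∈ S) : ∑ x ∈ S, #(incident F x) = 2 * #F := by
  simp_rw [incident, card_filter]
  rw [sum_comm, mul_comm, ← smul_eq_mul, ← sum_const]
  refine sum_congr rfl fun e he => ?_
  rw [← card_filter, ← Sym2.card_toFinset_of_not_isDiag e (hF e he)]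
  congr 1
  ext x
  simpa [Sym2.mem_toFinset] using hS e he x

theorem card_le_card_of_forall_mk_mem {T : Finset V} {F : Finset (Sym2 V)} {x : V}
    (h : ∀ t ∈ T, s(x, t) ∈ F) : #T ≤ #F :=
  card_le_card_of_injOn (fun t => s(x, t)) h fun _ _ _ _ hst => Sym2.congr_right.1 hst

variable [Fintype V] {G : SimpleGraph V}

theorem incident_edgeFinset (x : V) : incident G.edgeFinset x = G.incidenceFinset x :=
  (G.incidenceFinset_eq_filter x).symm

theorem degG_eq_card_incidenceFinset (v : V) : degG G v = #(G.incidenceFinset v) := by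
  rw [SimpleGraph.card_incidenceFinset_eq_degree, degG, ← SimpleGraph.card_neighborFinset_eq_degree,
    SimpleGraph.neighborFinset_eq_filter]

theorem vSum_eq_sum_incidenceFinset (w : Sym2 V → ℕ) (v : V) :
    vSum G w v = ∑ e ∈ G.incidenceFinset v, w e := by
  rw [vSum, ← SimpleGraph.neighborFinset_eq_filter,
    ← Finset.sum_image fun _ _ _ _ h => Sym2.congr_right.1 h]
  congr 1
  ext e
  induction e with
  | _ a b =>
    simp only [mem_image, SimpleGraph.mem_neighborFinset, SimpleGraph.mem_incidenceFinset,
      SimpleGraph.mk'_mem_incidenceSet_iff, Sym2.eq_iff]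
    constructor
    · rintro ⟨c, h, ⟨rfl, rfl⟩ | ⟨rfl, rfl⟩⟩
      exacts [⟨h, .inl rfl⟩, ⟨h.symm, .inr rfl⟩]
    · rintro ⟨h, rfl | rfl⟩
      exacts [⟨b, h, .inl ⟨rfl, rfl⟩⟩, ⟨a, h.symm, .inr ⟨rfl, rfl⟩⟩]

theorem exists_adj_eq_mk_of_mem_incidenceFinset {x : V} {e : Sym2 V}
    (he : e ∈ G.incidenceFinset x) : ∃ y, G.Adj x y ∧ e = s(x, y) := by
  rw [SimpleGraph.mem_incidenceFinset] at he
  refine ⟨Sym2.Mem.other he.2, ?_, (Sym2.other_spec he.2).symm⟩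
  rw [← SimpleGraph.mem_edgeSet, Sym2.other_spec he.2]
  exact he.1

theorem mk_mem_incidenceFinset_left {x y : V} (h : G.Adj x y) : s(x, y) ∈ G.incidenceFinset x :=
  (G.mem_incidenceFinset _ _).2 (G.mk'_mem_incidenceSet_left_iff.2 h)

theorem mk_mem_incidenceFinset_right {x y : V} (h : G.Adj x y) :
    s(x, y) ∈ G.incidenceFinset y :=
  (G.mem_incidenceFinset _ _).2 (G.mk'_mem_incidenceSet_right_iff.2 h)

theorem two_mul_card_le_of_mad
    (hmad : ∀ K : G.Subgraph, K.verts.Nonempty → 2 * K.edgeSet.ncard ≤ 3 * K.verts.ncard)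
    {S : Finset V} {F : Finset (Sym2 V)} (hF : F ⊆ G.edgeFinset)
    (hFS : ∀ e ∈ F, ∀ x ∈ e, x ∈ S) (hS : S.Nonempty) : 2 * #F ≤ 3 * #S := by
  let K : G.Subgraph :=
    { verts := S
      Adj := fun a b => s(a, b) ∈ F
      adj_sub := fun h => SimpleGraph.mem_edgeFinset.1 (hF h)
      edge_vert := fun h => hFS _ h _ (Sym2.mem_mk_left _ _)
      symm := ⟨fun a b (h : s(a, b) ∈ F) => show s(b, a) ∈ F from Sym2.eq_swap ▸ h⟩ }
  have hE : K.edgeSet = F := by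
    ext e
    induction e with
    | _ a b => rfl
  have := hmad K (coe_nonempty.2 hS)
  rwa [hE, Set.ncard_coe_finset, show K.verts = S from rfl, Set.ncard_coe_finset] at this

variable (G) in
def adjEdges (e : Sym2 V) : Finset (Sym2 V) := {f ∈ G.edgeFinset | f ≠ e ∧ ∃ x ∈ f, x ∈ e}

theorem mem_adjEdges {e f : Sym2 V} :
    f ∈ adjEdges G e ↔ f ∈ G.edgeFinset ∧ f ≠ e ∧ ∃ x ∈ f, x ∈ e :=
  mem_filter

theorem erase_incidenceFinset_subset_adjEdges {e : Sym2 V} {x : V} (hx : x ∈ e) :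
    (G.incidenceFinset x).erase e ⊆ adjEdges G e := by
  intro f hf
  rw [mem_erase, ← incident_edgeFinset, mem_incident] at hf
  exact mem_adjEdges.2 ⟨hf.2.1, hf.1, x, hf.2.2, hx⟩

theorem not_mem_and_mem_of_mem_adjEdges {u v : V} (huv : u ≠ v) {f : Sym2 V}
    (hf : f ∈ adjEdges G s(u, v)) : ¬(u ∈ f ∧ v ∈ f) := by
  rw [Sym2.mem_and_mem_iff huv]
  exact (mem_adjEdges.1 hf).2.1

variable (G) in
/-- The edges whose two ends are not already told apart by injectivity and positivity of the
weights alone. -/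
def riskyEdges : Finset (Sym2 V) :=
  {e ∈ G.edgeFinset | (∀ x ∈ e, 2 ≤ degG G x) ∧ ∃ x ∈ e, 3 ≤ degG G x}

variable (G) in
def riskyWithin (H : Finset (Sym2 V)) : Finset (Sym2 V) :=
  {e ∈ riskyEdges G | adjEdges G e ⊆ H}

variable (G) in
/-- When `H` is the set of edges weighted so far and `f` the last of them, these are the risky edges
whose adjacent edges have just all received a weight. -/
def completedBy (H : Finset (Sym2 V)) (f : Sym2 V) : Finset (Sym2 V) :=
  {e ∈ riskyWithin G H | f ∈ adjEdges G e}

theorem riskyWithin_subset_edgeFinset (H : Finset (Sym2 V)) : riskyWithin G H ⊆ G.edgeFinset :=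
  (filter_subset _ _).trans (filter_subset _ _)

theorem mem_riskyWithin {H : Finset (Sym2 V)} {e : Sym2 V} :
    e ∈ riskyWithin G H ↔ e ∈ riskyEdges G ∧ adjEdges G e ⊆ H :=
  mem_filter

theorem two_le_degG_of_mem_riskyWithin {H : Finset (Sym2 V)} {e : Sym2 V}
    (he : e ∈ riskyWithin G H) {x : V} (hx : x ∈ e) : 2 ≤ degG G x :=
  (mem_filter.1 (mem_riskyWithin.1 he).1).2.1 x hx

theorem riskyWithin_empty : riskyWithin G ∅ = ∅ := by
  refine eq_empty_of_forall_notMem fun e he => ?_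
  obtain ⟨x, hx⟩ : ∃ x, x ∈ e := ⟨_, Sym2.out_fst_mem e⟩
  have hdeg := two_le_degG_of_mem_riskyWithin he hx
  rw [degG_eq_card_incidenceFinset] at hdeg
  have hexcess : ((G.incidenceFinset x).erase e).Nonempty := by
    rw [← card_pos]
    have := pred_card_le_card_erase (s := G.incidenceFinset x) (a := e)
    omega
  obtain ⟨f, hf⟩ := hexcess
  simpa using (mem_riskyWithin.1 he).2 (erase_incidenceFinset_subset_adjEdges hx hf)

section Discharging

variable {H : Finset (Sym2 V)}

variable (G H) in
def riskyDeg (x : V) : ℕ := #(incident (riskyWithin G H) x)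

variable (G H) in
def riskyVerts : Finset V := {x | 0 < riskyDeg G H x}

variable (G H) in
def coreEdges : Finset (Sym2 V) :=
  riskyWithin G H ∪ {f ∈ H | ∀ x ∈ f, x ∈ riskyVerts G H}

variable (G H) in
def coreDeg (x : V) : ℕ := #(incident (coreEdges G H) x)

theorem card_completedBy_le {x y : V} :
    #(completedBy G H s(x, y)) + (if s(x, y) ∈ riskyWithin G H then 2 else 0) ≤
      riskyDeg G H x + riskyDeg G H y := by
  unfold riskyDeg
  set A := incident (riskyWithin G H) x
  set B := incident (riskyWithin G H) y
  have hsub : completedBy G H s(x, y) ⊆ (A ∪ B).erase s(x, y) := by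
    intro e he
    obtain ⟨heR, hfe⟩ := mem_filter.1 he
    obtain ⟨-, hne, z, hz, hze⟩ := mem_adjEdges.1 hfe
    refine mem_erase.2 ⟨Ne.symm hne, ?_⟩
    rcases Sym2.mem_iff.1 hz with rfl | rfl
    exacts [mem_union_left _ (mem_incident.2 ⟨heR, hze⟩),
      mem_union_right _ (mem_incident.2 ⟨heR, hze⟩)]
  have hcard := card_le_card hsub
  have hunion := card_union_add_card_inter A B
  split_ifs with hR
  · have hA : s(x, y) ∈ A := mem_incident.2 ⟨hR, Sym2.mem_mk_left x y⟩
    have hB : s(x, y) ∈ B := mem_incident.2 ⟨hR, Sym2.mem_mk_right x y⟩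
    rw [card_erase_of_mem (mem_union_left _ hA)] at hcard
    have := card_pos.2 ⟨_, mem_inter.2 ⟨hA, hB⟩⟩
    have := card_pos.2 ⟨_, mem_union_left B hA⟩
    omega
  · have := card_erase_le (s := A ∪ B) (a := s(x, y))
    omega

theorem mem_riskyVerts {x : V} : x ∈ riskyVerts G H ↔ 0 < riskyDeg G H x := by
  simp [riskyVerts]

theorem mem_riskyVerts_of_mem_riskyWithin {e : Sym2 V} (he : e ∈ riskyWithin G H) {x : V}
    (hx : x ∈ e) : x ∈ riskyVerts G H :=
  mem_riskyVerts.2 (card_pos.2 ⟨e, mem_incident.2 ⟨he, hx⟩⟩)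

theorem mem_riskyVerts_of_mem_coreEdges {f : Sym2 V} (hf : f ∈ coreEdges G H) {x : V}
    (hx : x ∈ f) : x ∈ riskyVerts G H := by
  rcases mem_union.1 hf with h | h
  exacts [mem_riskyVerts_of_mem_riskyWithin h hx, (mem_filter.1 h).2 x hx]

theorem mk_mem_coreEdges {x y : V} (hf : s(x, y) ∈ H) (hx : x ∈ riskyVerts G H)
    (hy : y ∈ riskyVerts G H) : s(x, y) ∈ coreEdges G H := by
  refine mem_union_right _ (mem_filter.2 ⟨hf, fun z hz => ?_⟩)
  rcases Sym2.mem_iff.1 hz with rfl | rfl <;> assumption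

theorem coreEdges_subset_edgeFinset (hH : H ⊆ G.edgeFinset) : coreEdges G H ⊆ G.edgeFinset :=
  union_subset (riskyWithin_subset_edgeFinset H) ((filter_subset _ _).trans hH)

theorem riskyDeg_le_coreDeg (x : V) : riskyDeg G H x ≤ coreDeg G H x :=
  card_le_card (incident_mono subset_union_left x)

theorem mem_of_mem_riskyWithin_of_two_le_riskyDeg {x t : V} (hR : s(x, t) ∈ riskyWithin G H)
    (h2 : 2 ≤ riskyDeg G H x) : s(x, t) ∈ H := by
  obtain ⟨e, he, hne⟩ := exists_mem_ne (s := incident (riskyWithin G H) x) h2 s(x, t)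
  obtain ⟨heR, hxe⟩ := mem_incident.1 he
  exact (mem_riskyWithin.1 heR).2 <| mem_adjEdges.2
    ⟨riskyWithin_subset_edgeFinset H hR, hne.symm, x, Sym2.mem_mk_left x t, hxe⟩

variable (G H) in
def IsDeficient (x : V) : Prop :=
  x ∈ riskyVerts G H ∧ coreDeg G H x = 2

variable (G H) in
/-- A relay sends a unit to a deficient neighbour and gets it back from a neighbour of large risky
degree. -/
def IsRelay (x : V) : Prop :=
  riskyDeg G H x = 1 ∧ ∃ z, s(x, z) ∈ riskyWithin G H ∧ s(x, z) ∉ H ∧ IsDeficient G H z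

variable (G H) in
/-- The discharging rule, in units of half an edge: a core vertex `x` starts with charge
`2 * coreDeg G H x` and sends one unit to every `t` with `Sends G H x t`. -/
def Sends (x t : V) : Prop :=
  s(x, t) ∈ coreEdges G H ∧
    ((5 ≤ riskyDeg G H x ∧ (IsDeficient G H t ∨ IsRelay G H t)) ∨
      (s(x, t) ∈ riskyWithin G H ∧ s(x, t) ∉ H ∧ IsDeficient G H t))

variable (G H) in
def recipients (x : V) : Finset V := {t ∈ riskyVerts G H | Sends G H x t}

variable (G H) in
def donors (t : V) : Finset V := {x ∈ riskyVerts G H | Sends G H x t}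

theorem IsDeficient.riskyDeg_le_two {x : V} (hd : IsDeficient G H x) : riskyDeg G H x ≤ 2 :=
  hd.2 ▸ riskyDeg_le_coreDeg x

theorem IsRelay.mem_riskyVerts {x : V} (hr : IsRelay G H x) : x ∈ riskyVerts G H :=
  NSDWeighting.mem_riskyVerts.2 (by rw [hr.1]; exact one_pos)

theorem mem_recipients {x t : V} : t ∈ recipients G H x ↔ Sends G H x t :=
  mem_filter.trans <| and_iff_right_of_imp fun h =>
    mem_riskyVerts_of_mem_coreEdges h.1 (Sym2.mem_mk_right x t)

theorem mem_donors {x t : V} : x ∈ donors G H t ↔ Sends G H x t :=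
  mem_filter.trans <| and_iff_right_of_imp fun h =>
    mem_riskyVerts_of_mem_coreEdges h.1 (Sym2.mem_mk_left x t)

theorem card_recipients_le_coreDeg (x : V) : #(recipients G H x) ≤ coreDeg G H x :=
  card_le_card_of_forall_mk_mem fun t ht =>
    mem_incident.2 ⟨(mem_recipients.1 ht).1, Sym2.mem_mk_left x t⟩

theorem Sends.of_riskyDeg_lt_five {x t : V} (h : Sends G H x t) (h5 : riskyDeg G H x < 5) :
    s(x, t) ∈ riskyWithin G H ∧ s(x, t) ∉ H ∧ IsDeficient G H t := by
  rcases h.2 with ⟨h5', -⟩ | h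
  exacts [absurd h5' (by omega), h]

theorem riskyDeg_eq_one_of_mem_riskyWithin_of_notMem {x t : V}
    (hR : s(x, t) ∈ riskyWithin G H) (hH : s(x, t) ∉ H) : riskyDeg G H x = 1 := by
  have : 0 < riskyDeg G H x := card_pos.2 ⟨_, mem_incident.2 ⟨hR, Sym2.mem_mk_left x t⟩⟩
  by_contra h1
  exact hH (mem_of_mem_riskyWithin_of_two_le_riskyDeg hR (by omega))

theorem recipients_eq_empty {x : V} (h5 : riskyDeg G H x < 5) (h1 : riskyDeg G H x ≠ 1) :
    recipients G H x = ∅ := by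
  refine eq_empty_of_forall_notMem fun t ht => h1 ?_
  obtain ⟨hR, hH, -⟩ := (mem_recipients.1 ht).of_riskyDeg_lt_five h5
  exact riskyDeg_eq_one_of_mem_riskyWithin_of_notMem hR hH

theorem card_recipients_le_one {x : V} (h1 : riskyDeg G H x = 1) : #(recipients G H x) ≤ 1 :=
  h1 ▸ card_le_card_of_forall_mk_mem fun t ht => mem_incident.2
    ⟨((mem_recipients.1 ht).of_riskyDeg_lt_five (by omega)).1, Sym2.mem_mk_left x t⟩

theorem isRelay_of_recipients_nonempty {x : V} (h1 : riskyDeg G H x = 1)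
    (hne : (recipients G H x).Nonempty) : IsRelay G H x := by
  obtain ⟨t, ht⟩ := hne
  exact ⟨h1, t, (mem_recipients.1 ht).of_riskyDeg_lt_five (by omega)⟩

theorem sends_of_mem {y x : V} (hf : s(y, x) ∈ H) (hy : 5 ≤ riskyDeg G H y)
    (hx : x ∈ riskyVerts G H) (hdr : IsDeficient G H x ∨ IsRelay G H x) : Sends G H y x :=
  ⟨mk_mem_coreEdges hf (mem_riskyVerts.2 (by omega)) hx, .inl ⟨hy, hdr⟩⟩

theorem incident_riskyWithin_subset (x : V) :
    incident (riskyWithin G H) x ⊆ G.incidenceFinset x :=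
  incident_edgeFinset (G := G) x ▸ incident_mono (riskyWithin_subset_edgeFinset H) x

variable (h7 : ∀ f ∈ H, 7 ≤ #(completedBy G H f))
include h7

theorem seven_le_riskyDeg_add {x y : V} (hf : s(x, y) ∈ H) :
    7 ≤ riskyDeg G H x + riskyDeg G H y := by
  have := card_completedBy_le (G := G) (H := H) (x := x) (y := y)
  have := h7 _ hf
  split_ifs at * <;> omega

theorem nine_le_riskyDeg_add {x y : V} (hf : s(x, y) ∈ H) (hR : s(x, y) ∈ riskyWithin G H) :
    9 ≤ riskyDeg G H x + riskyDeg G H y := by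
  have := card_completedBy_le (G := G) (H := H) (x := x) (y := y)
  have := h7 _ hf
  rw [if_pos hR] at *
  omega

theorem sends_of_mem_riskyWithin {v x : V} (hR : s(v, x) ∈ riskyWithin G H)
    (hd : IsDeficient G H x) : Sends G H v x := by
  refine ⟨mem_union_left _ hR, ?_⟩
  by_cases hH : s(v, x) ∈ H
  · have := nine_le_riskyDeg_add h7 hH hR
    have := hd.riskyDeg_le_two
    exact .inl ⟨by omega, .inl hd⟩
  · exact .inr ⟨hR, hH, hd⟩

theorem card_recipients_add_riskyDeg_le {x : V} (h5 : 5 ≤ riskyDeg G H x)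
    (h6 : riskyDeg G H x ≤ 6) : #(recipients G H x) + riskyDeg G H x ≤ coreDeg G H x := by
  have hsub : incident (riskyWithin G H) x ⊆ incident (coreEdges G H) x :=
    incident_mono subset_union_left x
  have hrec : #(recipients G H x) ≤
      #(incident (coreEdges G H) x \ incident (riskyWithin G H) x) := by
    refine card_le_card_of_forall_mk_mem (x := x) fun t ht => ?_
    obtain ⟨hE, hrule⟩ := mem_recipients.1 ht
    refine mem_sdiff.2 ⟨mem_incident.2 ⟨hE, Sym2.mem_mk_left x t⟩, fun hR => ?_⟩
    have hR := (mem_incident.1 hR).1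
    have hH := mem_of_mem_riskyWithin_of_two_le_riskyDeg hR (by omega)
    have h9 := nine_le_riskyDeg_add h7 hH hR
    rcases hrule with ⟨-, hd | hr⟩ | ⟨-, hH', -⟩
    · have := hd.riskyDeg_le_two
      omega
    · have := hr.1
      omega
    · exact hH' hH
  rw [card_sdiff_of_subset hsub] at hrec
  have := card_le_card hsub
  unfold riskyDeg coreDeg
  omega

theorem donors_nonempty_of_isRelay {x : V} (hr : IsRelay G H x) : (donors G H x).Nonempty := by
  obtain ⟨h1, z, hR, -, -⟩ := id hr
  have hdeg := two_le_degG_of_mem_riskyWithin hR (Sym2.mem_mk_left x z)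
  rw [degG_eq_card_incidenceFinset] at hdeg
  obtain ⟨g, hg, hgne⟩ := exists_mem_ne (s := G.incidenceFinset x) hdeg s(x, z)
  obtain ⟨y, -, rfl⟩ := exists_adj_eq_mk_of_mem_incidenceFinset hg
  have hgR : s(x, y) ∉ riskyWithin G H := fun hgR => by
    have : #({s(x, y), s(x, z)} : Finset _) ≤ riskyDeg G H x :=
      card_le_card (by simp [insert_subset_iff, mem_incident, hgR, hR])
    rw [card_pair hgne] at this
    omega
  have hgH : s(x, y) ∈ H := (mem_riskyWithin.1 hR).2 <|
    erase_incidenceFinset_subset_adjEdges (Sym2.mem_mk_left x z) (mem_erase.2 ⟨hgne, hg⟩)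
  have := seven_le_riskyDeg_add h7 hgH
  exact ⟨y, mem_donors.2 (sends_of_mem (Sym2.eq_swap ▸ hgH) (by omega) hr.mem_riskyVerts (.inr hr))⟩

variable (hH : H ⊆ G.edgeFinset)
include hH

theorem incident_coreEdges_eq {x : V} (hx : x ∈ riskyVerts G H) (hr : riskyDeg G H x ≤ 6) :
    incident (coreEdges G H) x = G.incidenceFinset x := by
  refine ((incident_mono (coreEdges_subset_edgeFinset hH) x).trans_eq
    (incident_edgeFinset x)).antisymm fun g hg => ?_
  obtain ⟨y, -, rfl⟩ := exists_adj_eq_mk_of_mem_incidenceFinset hg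
  refine mem_incident.2 ⟨?_, Sym2.mem_mk_left x y⟩
  by_cases hR : s(x, y) ∈ riskyWithin G H
  · exact mem_union_left _ hR
  obtain ⟨e, he⟩ := card_pos.1 (mem_riskyVerts.1 hx)
  obtain ⟨heR, hxe⟩ := mem_incident.1 he
  have hgH : s(x, y) ∈ H := (mem_riskyWithin.1 heR).2 <|
    erase_incidenceFinset_subset_adjEdges hxe (mem_erase.2 ⟨fun h => hR (h ▸ heR), hg⟩)
  have := seven_le_riskyDeg_add h7 hgH
  exact mk_mem_coreEdges hgH hx (mem_riskyVerts.2 (by omega))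

theorem coreDeg_eq_degG {x : V} (hx : x ∈ riskyVerts G H) (hr : riskyDeg G H x ≤ 6) :
    coreDeg G H x = degG G x := by
  rw [coreDeg, incident_coreEdges_eq h7 hH hx hr, degG_eq_card_incidenceFinset]

theorem IsDeficient.degG_eq_two {x : V} (hd : IsDeficient G H x) : degG G x = 2 := by
  rw [← coreDeg_eq_degG h7 hH hd.1 (by have := hd.riskyDeg_le_two; omega), hd.2]

theorem two_le_coreDeg {x : V} (hx : x ∈ riskyVerts G H) : 2 ≤ coreDeg G H x := by
  rcases le_or_gt (riskyDeg G H x) 6 with h6 | h6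
  · obtain ⟨e, he⟩ := card_pos.1 (mem_riskyVerts.1 hx)
    rw [coreDeg_eq_degG h7 hH hx h6]
    exact two_le_degG_of_mem_riskyWithin (mem_incident.1 he).1 (mem_incident.1 he).2
  · have := riskyDeg_le_coreDeg (G := G) (H := H) x
    omega

theorem recipients_eq_empty_of_isDeficient {x : V} (hd : IsDeficient G H x) :
    recipients G H x = ∅ := by
  refine eq_empty_of_forall_notMem fun t ht => ?_
  have := hd.riskyDeg_le_two
  obtain ⟨hR, -, hdt⟩ := (mem_recipients.1 ht).of_riskyDeg_lt_five (by omega)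
  obtain ⟨z, hz, h3⟩ := (mem_filter.1 (mem_riskyWithin.1 hR).1).2.2
  have := hd.degG_eq_two h7 hH
  have := hdt.degG_eq_two h7 hH
  rcases Sym2.mem_iff.1 hz with rfl | rfl <;> omega

theorem two_le_card_donors {x : V} (hd : IsDeficient G H x) : 2 ≤ #(donors G H x) := by
  have hdeg := hd.degG_eq_two h7 hH
  rw [degG_eq_card_incidenceFinset] at hdeg
  obtain ⟨e, he⟩ := card_pos.1 (mem_riskyVerts.1 hd.1)
  obtain ⟨heR, hxe⟩ := mem_incident.1 he
  obtain ⟨v, -, rfl⟩ := exists_adj_eq_mk_of_mem_incidenceFinset (incident_riskyWithin_subset x he)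
  obtain ⟨g, hg, hgne⟩ := exists_mem_ne (by omega : 1 < #(G.incidenceFinset x)) s(x, v)
  obtain ⟨w, -, rfl⟩ := exists_adj_eq_mk_of_mem_incidenceFinset hg
  have hvw : v ≠ w := by
    rintro rfl
    exact hgne rfl
  have hv : Sends G H v x := sends_of_mem_riskyWithin h7 (Sym2.eq_swap ▸ heR) hd
  have hw : Sends G H w x := by
    by_cases hR : s(x, w) ∈ riskyWithin G H
    · exact sends_of_mem_riskyWithin h7 (Sym2.eq_swap ▸ hR) hd
    have hgH : s(x, w) ∈ H := (mem_riskyWithin.1 heR).2 <|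
      erase_incidenceFinset_subset_adjEdges hxe (mem_erase.2 ⟨hgne, hg⟩)
    have h1 : riskyDeg G H x ≤ 1 := by
      have hsub : incident (riskyWithin G H) x ⊆ (G.incidenceFinset x).erase s(x, w) := fun f hf =>
        mem_erase.2 ⟨fun h => hR (h ▸ (mem_incident.1 hf).1), incident_riskyWithin_subset x hf⟩
      have := card_le_card hsub
      rw [card_erase_of_mem hg] at this
      unfold riskyDeg
      omega
    have := seven_le_riskyDeg_add h7 hgH
    exact sends_of_mem (Sym2.eq_swap ▸ hgH) (by omega) hd.1 (.inl hd)
  calc 2 = #{v, w} := (card_pair hvw).symm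
    _ ≤ #(donors G H x) := card_le_card (by simp [insert_subset_iff, mem_donors, hv, hw])

theorem card_recipients_add_six_le {x : V} (hx : x ∈ riskyVerts G H) :
    #(recipients G H x) + 6 ≤ 2 * coreDeg G H x + #(donors G H x) ∧
      (4 ≤ riskyDeg G H x → #(recipients G H x) + 7 ≤ 2 * coreDeg G H x + #(donors G H x)) := by
  have hrc := riskyDeg_le_coreDeg (G := G) (H := H) x
  have h2 := two_le_coreDeg h7 hH hx
  rcases lt_or_ge (riskyDeg G H x) 5 with h5 | h5
  · by_cases hcd : coreDeg G H x = 2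
    · have := two_le_card_donors h7 hH ⟨hx, hcd⟩
      rw [recipients_eq_empty_of_isDeficient h7 hH ⟨hx, hcd⟩, card_empty]
      omega
    by_cases h1 : riskyDeg G H x = 1
    · have := card_recipients_le_one h1
      by_cases hrec : (recipients G H x).Nonempty
      · have := card_pos.2 (donors_nonempty_of_isRelay h7 (isRelay_of_recipients_nonempty h1 hrec))
        omega
      · rw [not_nonempty_iff_eq_empty.1 hrec, card_empty]
        omega
    · rw [recipients_eq_empty h5 h1, card_empty]
      omega
  · rcases lt_or_ge (riskyDeg G H x) 7 with h6 | h6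
    · have := card_recipients_add_riskyDeg_le h7 h5 (by omega)
      omega
    · have := card_recipients_le_coreDeg (G := G) (H := H) x
      omega

end Discharging

theorem exists_card_completedBy_le_six
    (hmad : ∀ K : G.Subgraph, K.verts.Nonempty → 2 * K.edgeSet.ncard ≤ 3 * K.verts.ncard)
    {H : Finset (Sym2 V)} (hH : H ⊆ G.edgeFinset) (hne : H.Nonempty) :
    ∃ f ∈ H, #(completedBy G H f) ≤ 6 := by
  by_contra! h7
  replace h7 : ∀ f ∈ H, 7 ≤ #(completedBy G H f) := h7
  obtain ⟨f, hf⟩ := hne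
  obtain ⟨x₀, hx₀⟩ : ∃ x, 4 ≤ riskyDeg G H x := by
    obtain ⟨x, y⟩ := f
    have := seven_le_riskyDeg_add h7 hf
    exact if h : 4 ≤ riskyDeg G H x then ⟨x, h⟩ else ⟨y, by omega⟩
  have hx₀V : x₀ ∈ riskyVerts G H := mem_riskyVerts.2 (by omega)
  have hcore : ∀ e ∈ coreEdges G H, ∀ x ∈ e, x ∈ riskyVerts G H :=
    fun _ he _ hx => mem_riskyVerts_of_mem_coreEdges he hx
  have hmadE := two_mul_card_le_of_mad hmad (coreEdges_subset_edgeFinset hH) hcore ⟨x₀, hx₀V⟩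
  have hdeg : ∑ x ∈ riskyVerts G H, coreDeg G H x = 2 * #(coreEdges G H) :=
    sum_card_incident (fun e he => G.not_isDiag_of_mem_edgeSet
      (SimpleGraph.mem_edgeFinset.1 (coreEdges_subset_edgeFinset hH he))) hcore
  have hflow : ∑ x ∈ riskyVerts G H, #(recipients G H x) =
      ∑ x ∈ riskyVerts G H, #(donors G H x) :=
    sum_card_bipartiteAbove_eq_sum_card_bipartiteBelow _
  have hcharge : ∑ x ∈ riskyVerts G H, (#(recipients G H x) + 6) <
      ∑ x ∈ riskyVerts G H, (2 * coreDeg G H x + #(donors G H x)) :=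
    sum_lt_sum (fun x hx => (card_recipients_add_six_le h7 hH hx).1)
      ⟨x₀, hx₀V, (card_recipients_add_six_le h7 hH hx₀V).2 hx₀⟩
  rw [sum_add_distrib, sum_add_distrib, ← mul_sum, hdeg, hflow, sum_const, smul_eq_mul] at hcharge
  omega

section Weighting

variable (G) in
def vSumExcept (w : Sym2 V → ℕ) (e : Sym2 V) (x : V) : ℕ :=
  ∑ g ∈ (G.incidenceFinset x).erase e, w g

variable (G) in
def Separates (w : Sym2 V → ℕ) (e : Sym2 V) : Prop :=
  ∀ u v, e = s(u, v) → vSumExcept G w e u ≠ vSumExcept G w e v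

variable (G) in
structure IsGoodOn (W : Finset ℕ) (A : Finset (Sym2 V)) (w : Sym2 V → ℕ) : Prop where
  mapsTo : Set.MapsTo w A W
  injOn : Set.InjOn w A
  separates : ∀ e ∈ riskyWithin G A, Separates G w e

variable (G) in
def badValues (W : Finset ℕ) (w : Sym2 V → ℕ) (f e : Sym2 V) : Finset ℕ :=
  {t ∈ W | ¬Separates G (Function.update w f t) e}

variable {w : Sym2 V → ℕ} {W : Finset ℕ}

theorem vSum_eq_add_vSumExcept {e : Sym2 V} {x : V} (he : e ∈ G.incidenceFinset x) :
    vSum G w x = w e + vSumExcept G w e x := by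
  rw [vSum_eq_sum_incidenceFinset, vSumExcept, add_sum_erase _ _ he]

theorem separates_mk_iff {u v : V} :
    Separates G w s(u, v) ↔ vSumExcept G w s(u, v) u ≠ vSumExcept G w s(u, v) v := by
  refine ⟨fun h => h u v rfl, fun h a b hab => ?_⟩
  rcases Sym2.eq_iff.1 hab with ⟨rfl, rfl⟩ | ⟨rfl, rfl⟩
  exacts [h, h.symm]

theorem vSumExcept_update_of_mem {e f : Sym2 V} {x : V} (hf : f ∈ (G.incidenceFinset x).erase e)
    (t : ℕ) : vSumExcept G (Function.update w f t) e x =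
      t + ∑ g ∈ ((G.incidenceFinset x).erase e).erase f, w g := by
  rw [vSumExcept, sum_update_of_mem hf, sdiff_singleton_eq_erase]

theorem vSumExcept_update_of_notMem {e f : Sym2 V} {x : V}
    (hf : f ∉ (G.incidenceFinset x).erase e) (t : ℕ) :
    vSumExcept G (Function.update w f t) e x = vSumExcept G w e x :=
  sum_update_of_notMem hf _ _

theorem mem_erase_incidenceFinset_iff {e f : Sym2 V} (hf : f ∈ adjEdges G e) {x : V} :
    f ∈ (G.incidenceFinset x).erase e ↔ x ∈ f := by
  obtain ⟨hfE, hfe, -⟩ := mem_adjEdges.1 hf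
  rw [mem_erase, ← incident_edgeFinset, mem_incident]
  tauto

theorem card_badValues_le_one {e f : Sym2 V} (he : e ∈ G.edgeFinset) (hf : f ∈ adjEdges G e) :
    #(badValues G W w f e) ≤ 1 := by
  obtain ⟨u, v⟩ := e
  have huv : u ≠ v := G.ne_of_adj (SimpleGraph.mem_edgeFinset.1 he)
  have hside := not_mem_and_mem_of_mem_adjEdges huv hf
  obtain ⟨-, -, z, hzf, hz⟩ := mem_adjEdges.1 hf
  simp only [← mem_erase_incidenceFinset_iff hf] at hside hzf
  -- `f` lies at exactly one end of `e`, and only the sum at that end depends on the weight of `f`.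
  refine card_le_one.2 fun t₁ h₁ t₂ h₂ => ?_
  simp only [badValues, mem_filter, separates_mk_iff, not_not] at h₁ h₂
  rcases Sym2.mem_iff.1 hz with rfl | rfl
  · have hv : f ∉ (G.incidenceFinset v).erase s(z, v) := fun hv => hside ⟨hzf, hv⟩
    rw [vSumExcept_update_of_mem hzf, vSumExcept_update_of_notMem hv] at h₁ h₂
    omega
  · have hu : f ∉ (G.incidenceFinset u).erase s(u, z) := fun hu => hside ⟨hu, hzf⟩
    rw [vSumExcept_update_of_mem hzf, vSumExcept_update_of_notMem hu] at h₁ h₂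
    omega

theorem IsGoodOn.exists_update {A : Finset (Sym2 V)} {f : Sym2 V} (hw : IsGoodOn G W A w)
    (hfA : f ∉ A) (hf : #(completedBy G (insert f A) f) ≤ 6) (hW : #A + 7 ≤ #W) :
    ∃ t, IsGoodOn G W (insert f A) (Function.update w f t) := by
  set T := (completedBy G (insert f A) f).biUnion (badValues G W w f)
  have hT : #T ≤ 6 := by
    refine (card_biUnion_le_card_mul _ _ 1 fun e he => ?_).trans (by omega)
    obtain ⟨heR, hfe⟩ := mem_filter.1 he
    exact card_badValues_le_one (riskyWithin_subset_edgeFinset _ heR) hfe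
  obtain ⟨t, ht⟩ : ((W \ A.image w) \ T).Nonempty := by
    have := le_card_sdiff (A.image w) W
    have := le_card_sdiff T (W \ A.image w)
    have := card_image_le (s := A) (f := w)
    rw [← card_pos]
    omega
  simp only [mem_sdiff] at ht
  obtain ⟨⟨htW, htA⟩, htT⟩ := ht
  have heq : Set.EqOn (Function.update w f t) w A := fun g hg =>
    Function.update_of_ne (ne_of_mem_of_not_mem hg hfA) _ _
  refine ⟨t, ⟨fun g hg => ?_, ?_, fun e he => ?_⟩⟩
  · rcases mem_insert.1 hg with rfl | hg
    · simpa using htW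
    · exact heq hg ▸ hw.mapsTo hg
  · rw [coe_insert, Set.injOn_insert (mod_cast hfA)]
    refine ⟨hw.injOn.congr heq.symm, fun ⟨g, hg, hgt⟩ => htA (mem_image.2 ⟨g, hg, ?_⟩)⟩
    rwa [heq hg, Function.update_self] at hgt
  by_cases hfe : f ∈ adjEdges G e
  · exact not_not.1 fun h => htT (mem_biUnion.2 ⟨e, mem_filter.2 ⟨he, hfe⟩, mem_filter.2 ⟨htW, h⟩⟩)
  obtain ⟨heR, hDe⟩ := mem_riskyWithin.1 he
  have heA : e ∈ riskyWithin G A := mem_riskyWithin.2 ⟨heR, fun g hg =>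
    (mem_insert.1 (hDe hg)).resolve_left fun hgf => hfe (hgf ▸ hg)⟩
  intro u v huv
  have hnot {x : V} (hx : x ∈ e) : f ∉ (G.incidenceFinset x).erase e := fun h =>
    hfe (erase_incidenceFinset_subset_adjEdges hx h)
  rw [vSumExcept_update_of_notMem (hnot (huv ▸ Sym2.mem_mk_left u v)),
    vSumExcept_update_of_notMem (hnot (huv ▸ Sym2.mem_mk_right u v))]
  exact hw.separates e heA u v huv

theorem exists_isGoodOn
    (hmad : ∀ K : G.Subgraph, K.verts.Nonempty → 2 * K.edgeSet.ncard ≤ 3 * K.verts.ncard)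
    (H : Finset (Sym2 V)) (hH : H ⊆ G.edgeFinset) (hW : #H + 6 ≤ #W) :
    ∃ w, IsGoodOn G W H w := by
  induction H using Finset.strongInduction with
  | H H ih =>
    rcases H.eq_empty_or_nonempty with rfl | hne
    · exact ⟨0, by simp [Set.mapsTo_empty], by simp, by simp [riskyWithin_empty]⟩
    obtain ⟨f, hf, h6⟩ := exists_card_completedBy_le_six hmad hH hne
    have hcard := card_erase_add_one hf
    obtain ⟨w, hw⟩ := ih _ (erase_ssubset hf) ((erase_subset f H).trans hH) (by omega)
    obtain ⟨t, ht⟩ := hw.exists_update (notMem_erase f H) (by rwa [insert_erase hf]) (by omega)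
    exact ⟨_, insert_erase hf ▸ ht⟩

theorem vSumExcept_eq_zero {e : Sym2 V} {x : V} (he : e ∈ G.incidenceFinset x)
    (hx : degG G x = 1) : vSumExcept G w e x = 0 := by
  rw [degG_eq_card_incidenceFinset] at hx
  have : (G.incidenceFinset x).erase e = ∅ := card_eq_zero.1 (by rw [card_erase_of_mem he, hx])
  rw [vSumExcept, this, sum_empty]

theorem vSumExcept_pos (hw : ∀ g ∈ G.edgeFinset, 0 < w g) {e : Sym2 V} {x : V}
    (he : e ∈ G.incidenceFinset x) (hx : 2 ≤ degG G x) : 0 < vSumExcept G w e x := by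
  rw [degG_eq_card_incidenceFinset] at hx
  obtain ⟨g, hg⟩ : ((G.incidenceFinset x).erase e).Nonempty := by
    rw [← card_pos, card_erase_of_mem he]
    omega
  exact (hw g (G.incidenceFinset_subset x (mem_of_mem_erase hg))).trans_le
    (single_le_sum (fun _ _ => Nat.zero_le _) hg)

theorem vSumExcept_ne_of_degG_eq_two (hw : Set.InjOn w G.edgeSet) {u v : V} (huv : G.Adj u v)
    (hu : degG G u = 2) (hv : degG G v = 2) :
    vSumExcept G w s(u, v) u ≠ vSumExcept G w s(u, v) v := by
  have hone {x : V} (hx : degG G x = 2) (he : s(u, v) ∈ G.incidenceFinset x) :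
      ∃ g, (G.incidenceFinset x).erase s(u, v) = {g} := by
    rw [degG_eq_card_incidenceFinset] at hx
    exact card_eq_one.1 (by rw [card_erase_of_mem he, hx])
  obtain ⟨g, hg⟩ := hone hu (mk_mem_incidenceFinset_left huv)
  obtain ⟨g', hg'⟩ := hone hv (mk_mem_incidenceFinset_right huv)
  have hgm := hg ▸ mem_singleton_self g
  have hgm' := hg' ▸ mem_singleton_self g'
  simp only [mem_erase, SimpleGraph.mem_incidenceFinset] at hgm hgm'
  rw [vSumExcept, vSumExcept, hg, hg', sum_singleton, sum_singleton]
  intro hww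
  obtain rfl := hw hgm.2.1 hgm'.2.1 hww
  exact hgm.1 ((Sym2.mem_and_mem_iff (G.ne_of_adj huv)).1 ⟨hgm.2.2, hgm'.2.2⟩)

theorem IsGoodOn.nsd (hnice : Nice G) (hW : ∀ x ∈ W, 0 < x) (hw : IsGoodOn G W G.edgeFinset w) :
    NSD G w := by
  intro u v huv
  have hu := mk_mem_incidenceFinset_left huv
  have hv := mk_mem_incidenceFinset_right huv
  rw [vSum_eq_add_vSumExcept hu, vSum_eq_add_vSumExcept hv, Ne, Nat.add_left_cancel_iff]
  have hpos : ∀ g ∈ G.edgeFinset, 0 < w g := fun g hg => hW _ (hw.mapsTo (mem_coe.2 hg))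
  have hdu : 0 < degG G u := card_pos.2 ⟨v, by simpa using huv⟩
  have hdv : 0 < degG G v := card_pos.2 ⟨u, by simpa using huv.symm⟩
  have hnice := hnice u v huv
  by_cases h1u : degG G u = 1
  · rw [vSumExcept_eq_zero hu h1u]
    exact (vSumExcept_pos hpos hv (by omega)).ne
  by_cases h1v : degG G v = 1
  · rw [vSumExcept_eq_zero hv h1v]
    exact (vSumExcept_pos hpos hu (by omega)).ne'
  by_cases h2 : degG G u = 2 ∧ degG G v = 2
  · exact vSumExcept_ne_of_degG_eq_two (by simpa using hw.injOn) huv h2.1 h2.2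
  have hrisky : s(u, v) ∈ riskyEdges G := by
    refine mem_filter.2 ⟨SimpleGraph.mem_edgeFinset.2 huv, fun x hx => ?_, ?_⟩
    · rcases Sym2.mem_iff.1 hx with rfl | rfl <;> omega
    · by_cases h3 : 3 ≤ degG G u
      exacts [⟨u, Sym2.mem_mk_left u v, h3⟩, ⟨v, Sym2.mem_mk_right u v, by omega⟩]
  exact hw.separates _ (mem_riskyWithin.2 ⟨hrisky, filter_subset _ _⟩) u v rfl

end Weighting

end NSDWeighting

end

theorem stmt_14 {V : Type*} [Fintype V] (G : SimpleGraph V) (hnice : Nice G)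
    (hmad : ∀ H : G.Subgraph, H.verts.Nonempty → 2 * H.edgeSet.ncard ≤ 3 * H.verts.ncard) :
    (∀ W : Finset ℕ, (∀ x ∈ W, 0 < x) → W.card = G.edgeSet.ncard + 6 →
        ∃ w : Sym2 V → ℕ, Set.InjOn w G.edgeSet ∧ Set.MapsTo w G.edgeSet ↑W ∧ NSD G w)
      ∧ chiE1 G ≤ G.edgeSet.ncard + 6 := by
  have hm : G.edgeSet.ncard = #G.edgeFinset := Set.ncard_eq_toFinset_card' _
  have hweights : ∀ W : Finset ℕ, (∀ x ∈ W, 0 < x) → W.card = G.edgeSet.ncard + 6 →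
      ∃ w : Sym2 V → ℕ, Set.InjOn w G.edgeSet ∧ Set.MapsTo w G.edgeSet ↑W ∧ NSD G w := by
    intro W hpos hcard
    obtain ⟨w, hw⟩ := NSDWeighting.exists_isGoodOn hmad G.edgeFinset subset_rfl (W := W) (by omega)
    refine ⟨w, ?_, ?_, hw.nsd hnice hpos⟩
    · simpa using hw.injOn
    · simpa using hw.mapsTo
  refine ⟨hweights, Nat.sInf_le ?_⟩
  obtain ⟨w, hinj, hmaps, hnsd⟩ := hweights (Icc 1 (G.edgeSet.ncard + 6))
    (fun x hx => (mem_Icc.1 hx).1) (by simp)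
  exact ⟨w, fun e he => hmaps he, fun e he f hf h => hinj he hf h, hnsd⟩
end

section
/- Let G be a nice finite simple graph, and suppose G is a subdivided star: a tree with exactly one vertex r of degree at least 3 in which every vertex other than r has degree at most 2. Then for every set W of |E(G)| distinct strictly positive integers, there exists an edge-injective neighbour-sum-distinguishing edge-weighting of G using exactly the weights of W (a bijection from E(G) onto W that is neighbour-sum-distinguishing). -/
open scoped Classical
open Finset

-- helper: top-d subset
lemma exists_top_subset (W : Finset ℕ) : ∀ d, d ≤ W.card →
    ∃ T ⊆ W, T.card = d ∧ ∀ x ∈ T, ∀ y ∈ W \ T, y < x := by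
  intro d
  induction d with
  | zero => exact fun _ => ⟨∅, by simp⟩
  | succ n ih =>
    intro hd
    obtain ⟨T, hTW, hTc, hTt⟩ := ih (Nat.le_of_succ_le hd)
    have hne : (W \ T).Nonempty := by
      rw [← Finset.card_pos, Finset.card_sdiff_of_subset hTW, hTc]
      omega
    set m := (W \ T).max' hne with hm
    have hmmem : m ∈ W \ T := Finset.max'_mem _ hne
    have hmW : m ∈ W := (Finset.mem_sdiff.1 hmmem).1
    have hmT : m ∉ T := (Finset.mem_sdiff.1 hmmem).2
    refine ⟨insert m T, Finset.insert_subset hmW hTW, by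
      rw [Finset.card_insert_of_notMem hmT, hTc], ?_⟩
    intro x hx y hy
    have hyT : y ∈ W \ T := by
      rw [Finset.mem_sdiff] at hy ⊢
      exact ⟨hy.1, fun h => hy.2 (Finset.mem_insert_of_mem h)⟩
    rcases Finset.mem_insert.1 hx with hxm | hxT
    · subst hxm
      have hle : y ≤ m := Finset.le_max' _ _ hyT
      have hne' : y ≠ m := fun h => (Finset.mem_sdiff.1 hy).2 (h ▸ Finset.mem_insert_self m T)
      omega
    · exact hTt x hxT y hyT

-- helper: bijection between finsets of equal card
lemma exists_bijOn_of_card_eq {α β : Type*} [Nonempty β] (s : Finset α) (t : Finset β)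
    (h : s.card = t.card) : ∃ f : α → β, Set.BijOn f ↑s ↑t ∧ ∀ a ∈ s, f a ∈ t := by
  have hcard : Fintype.card ↥s = Fintype.card ↥t := by
    simp [Fintype.card_coe, h]
  obtain ⟨e⟩ : Nonempty (↥s ≃ ↥t) := ⟨Fintype.equivOfCardEq hcard⟩
  classical
  obtain ⟨b⟩ := ‹Nonempty β›
  refine ⟨fun a => if ha : a ∈ s then (e ⟨a, ha⟩ : β) else b, ?_, ?_⟩
  · refine ⟨?_, ?_, ?_⟩
    · intro a ha
      simp only [Finset.mem_coe] at ha
      simp only [ha, dif_pos]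
      exact (e ⟨a, ha⟩).2
    · intro a ha a' ha' hval
      simp only [Finset.mem_coe] at ha ha'
      simp only [ha, ha', dif_pos] at hval
      have := e.injective (Subtype.ext hval)
      exact congrArg Subtype.val this
    · intro y hy
      simp only [Finset.mem_coe] at hy
      refine ⟨(e.symm ⟨y, hy⟩ : α), (e.symm ⟨y, hy⟩).2, ?_⟩
      simp only [Finset.coe_mem, dif_pos]
      simp
  · intro a ha
    simp only [ha, dif_pos]
    exact (e ⟨a, ha⟩).2


theorem stmt_15 {V : Type*} [Fintype V] (G : SimpleGraph V) (hnice : Nice G)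
    (hT : G.IsTree) (r : V) (hr : 3 ≤ degG G r) (hother : ∀ v, v ≠ r → degG G v ≤ 2)
    (W : Finset ℕ) (hWpos : ∀ x ∈ W, 0 < x) (hWcard : W.card = G.edgeSet.ncard) :
    ∃ w : Sym2 V → ℕ, Set.BijOn w G.edgeSet ↑W ∧ NSD G w := by
  classical
  set N : V → Finset V := fun v => Finset.univ.filter (fun x => G.Adj v x) with hN
  have hdegN : ∀ v, degG G v = (N v).card := fun v => rfl
  set E : Finset (Sym2 V) := G.edgeFinset with hE
  have hEcard : E.card = G.edgeSet.ncard := by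
    rw [Set.ncard_eq_toFinset_card']
    rw [hE]; exact congrArg Finset.card (by ext; simp)
  set A : Finset (Sym2 V) := E.filter (fun e => r ∈ e) with hA
  have hAE : A ⊆ E := Finset.filter_subset _ _
  have hAcard : A.card = degG G r := by
    have h1 : A = G.incidenceFinset r := (G.incidenceFinset_eq_filter r).symm
    rw [h1, SimpleGraph.card_incidenceFinset_eq_degree]
    simp [degG, SimpleGraph.degree, SimpleGraph.neighborFinset_eq_filter]
  have hdW : degG G r ≤ W.card := by
    rw [hWcard, ← hEcard, ← hAcard]; exact Finset.card_le_card hAE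
  obtain ⟨T, hTW, hTc, hTt⟩ := exists_top_subset W (degG G r) hdW
  obtain ⟨f1, hf1, -⟩ := exists_bijOn_of_card_eq A T (by rw [hAcard, hTc])
  obtain ⟨f2, hf2, -⟩ := exists_bijOn_of_card_eq (E \ A) (W \ T)
    (by rw [Finset.card_sdiff_of_subset hAE, Finset.card_sdiff_of_subset hTW, hAcard, hTc, hEcard, ← hWcard])
  set w : Sym2 V → ℕ := fun e => if e ∈ A then f1 e else f2 e with hw
  have hwA : ∀ e ∈ A, w e ∈ T := by
    intro e he; simp only [hw, he, if_pos]; exact hf1.mapsTo he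
  have hwB : ∀ e ∈ E, e ∉ A → w e ∈ W \ T := by
    intro e he hne; simp only [hw, hne, if_neg, if_false]
    exact hf2.mapsTo (by simp [Finset.mem_sdiff, he, hne])
  have hwW : ∀ e ∈ E, w e ∈ W := by
    intro e he
    by_cases h : e ∈ A
    · exact hTW (hwA e h)
    · exact (Finset.mem_sdiff.1 (hwB e he h)).1
  have hwpos : ∀ e ∈ E, 0 < w e := fun e he => hWpos _ (hwW e he)
  -- the bijection
  have h1 : Set.BijOn w ↑A ↑T := hf1.congr (fun e he => by
    simp only [Finset.mem_coe] at he; simp [hw, he])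
  have h2 : Set.BijOn w ↑(E \ A) ↑(W \ T) := hf2.congr (fun e he => by
    simp only [Finset.mem_coe, Finset.mem_sdiff] at he; simp [hw, he.2])
  have hinj : Set.InjOn w (↑A ∪ ↑(E \ A)) := by
    rintro x (hx | hx) y (hy | hy) hxy
    · exact h1.injOn hx hy hxy
    · exfalso
      have h1' : w x ∈ T := hwA x hx
      have h2' : w y ∈ W \ T := by
        simp only [Finset.mem_coe, Finset.mem_sdiff] at hy; exact hwB y hy.1 hy.2
      rw [hxy] at h1'
      exact (Finset.mem_sdiff.1 h2').2 h1'
    · exfalso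
      have h1' : w y ∈ T := hwA y hy
      have h2' : w x ∈ W \ T := by
        simp only [Finset.mem_coe, Finset.mem_sdiff] at hx; exact hwB x hx.1 hx.2
      rw [← hxy] at h1'
      exact (Finset.mem_sdiff.1 h2').2 h1'
    · exact h2.injOn hx hy hxy
  have hbij : Set.BijOn w G.edgeSet ↑W := by
    have := (h1.union h2) hinj
    rwa [← Finset.coe_union, ← Finset.coe_union, Finset.union_sdiff_of_subset hAE,
      Finset.union_sdiff_of_subset hTW, hE, SimpleGraph.coe_edgeFinset] at this
  have winj : ∀ e ∈ E, ∀ e' ∈ E, w e = w e' → e = e' := by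
    intro e he e' he' hval
    refine hbij.injOn ?_ ?_ hval <;>
      rw [← SimpleGraph.coe_edgeFinset, ← hE] <;> simpa
  -- membership helpers
  have hmemE : ∀ {a b : V}, G.Adj a b → s(a, b) ∈ E := by
    intro a b h
    rw [hE, SimpleGraph.mem_edgeFinset, SimpleGraph.mem_edgeSet]; exact h
  have hmemA : ∀ {b : V}, G.Adj r b → s(r, b) ∈ A := by
    intro b h
    rw [hA, Finset.mem_filter]
    exact ⟨hmemE h, Sym2.mem_iff.2 (Or.inl rfl)⟩
  have hnotA : ∀ {a b : V}, G.Adj a b → a ≠ r → b ≠ r → w s(a, b) ∈ W \ T := by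
    intro a b h ha hb
    refine hwB _ (hmemE h) ?_
    rw [hA, Finset.mem_filter]
    rintro ⟨-, hmem⟩
    rcases Sym2.mem_iff.1 hmem with h' | h'
    · exact ha h'.symm
    · exact hb h'.symm
  have hvSum : ∀ v, vSum G w v = ∑ x ∈ N v, w s(v, x) := fun v => rfl
  have hsplit : ∀ u v, G.Adj u v →
      vSum G w u = w s(u, v) + ∑ x ∈ (N u).erase v, w s(u, x) := by
    intro u v h
    have hv : v ∈ N u := by simp [hN, h]
    rw [hvSum]
    exact (Finset.add_sum_erase _ _ hv).symm
  -- Claim 1 : edges at r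
  have claim1 : ∀ v, G.Adj r v → vSum G w v < vSum G w r := by
    intro v hrv
    have hvr : G.Adj v r := hrv.symm
    have hvne : v ≠ r := (G.ne_of_adj hrv).symm
    rw [hsplit r v hrv, hsplit v r hvr, Sym2.eq_swap (a := v) (b := r)]
    apply Nat.add_lt_add_left
    have hvNr : v ∈ N r := by simp [hN, hrv]
    have hrNv : r ∈ N v := by simp [hN, hvr]
    have hcard : 1 ≤ ((N r).erase v).card := by
      have h1 := Finset.card_erase_of_mem hvNr
      have h2 : 3 ≤ (N r).card := hdegN r ▸ hr
      omega
    obtain ⟨x0, hx0⟩ := Finset.card_pos.1 (by omega : 0 < ((N r).erase v).card)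
    have hx0adj : G.Adj r x0 := by
      have := Finset.mem_of_mem_erase hx0
      simpa [hN] using this
    have hx0T : w s(r, x0) ∈ T := hwA _ (hmemA hx0adj)
    have hSr : w s(r, x0) ≤ ∑ x ∈ (N r).erase v, w s(r, x) :=
      Finset.single_le_sum (f := fun x => w s(r, x)) (fun _ _ => Nat.zero_le _) hx0
    have hScard : ((N v).erase r).card ≤ 1 := by
      have h1 : (N v).card ≤ 2 := hdegN v ▸ hother v hvne
      have h2 := Finset.card_erase_of_mem hrNv
      omega
    have hSv : (∑ x ∈ (N v).erase r, w s(v, x)) < w s(r, x0) := by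
      rcases ((N v).erase r).eq_empty_or_nonempty with he | ⟨y0, hy0⟩
      · rw [he, Finset.sum_empty]
        exact hWpos _ (hTW hx0T)
      · have hsingle : (N v).erase r = {y0} :=
          Finset.eq_singleton_iff_unique_mem.2
            ⟨hy0, fun z hz => Finset.card_le_one.1 hScard z hz y0 hy0⟩
        rw [hsingle, Finset.sum_singleton]
        have hy0ne : y0 ≠ r := Finset.ne_of_mem_erase hy0
        have hy0adj : G.Adj v y0 := by
          have := Finset.mem_of_mem_erase hy0
          simpa [hN] using this
        exact hTt _ hx0T _ (hnotA hy0adj hvne hy0ne)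
    omega
  -- Claim 2 : edges not at r
  have claim2 : ∀ u v, G.Adj u v → u ≠ r → v ≠ r → vSum G w u ≠ vSum G w v := by
    intro u v huv hur hvr
    have hvu : G.Adj v u := huv.symm
    have huvne : u ≠ v := G.ne_of_adj huv
    rw [hsplit u v huv, hsplit v u hvu, Sym2.eq_swap (a := v) (b := u)]
    have hvNu : v ∈ N u := by simp [hN, huv]
    have huNv : u ∈ N v := by simp [hN, hvu]
    have hcu : ((N u).erase v).card ≤ 1 := by
      have h1 : (N u).card ≤ 2 := hdegN u ▸ hother u hur
      have h2 := Finset.card_erase_of_mem hvNu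
      omega
    have hcv : ((N v).erase u).card ≤ 1 := by
      have h1 : (N v).card ≤ 2 := hdegN v ▸ hother v hvr
      have h2 := Finset.card_erase_of_mem huNv
      omega
    intro hcontra
    have hSuSv : (∑ x ∈ (N u).erase v, w s(u, x)) = ∑ x ∈ (N v).erase u, w s(v, x) :=
      Nat.add_left_cancel hcontra
    rcases ((N u).erase v).eq_empty_or_nonempty with heu | ⟨a, ha⟩ <;>
      rcases ((N v).erase u).eq_empty_or_nonempty with hev | ⟨b, hb⟩
    · -- both leaves : contradicts Nice
      have hNu : N u = {v} := by
        rcases (Finset.erase_eq_empty_iff _ _).1 heu with h | h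
        · exact absurd (h ▸ hvNu) (Finset.notMem_empty v)
        · exact h
      have hNv : N v = {u} := by
        rcases (Finset.erase_eq_empty_iff _ _).1 hev with h | h
        · exact absurd (h ▸ huNv) (Finset.notMem_empty u)
        · exact h
      exact hnice u v huv ⟨by rw [hdegN, hNu, Finset.card_singleton],
        by rw [hdegN, hNv, Finset.card_singleton]⟩
    · have hsingle : (N v).erase u = {b} :=
        Finset.eq_singleton_iff_unique_mem.2
          ⟨hb, fun z hz => Finset.card_le_one.1 hcv z hz b hb⟩
      have hbadj : G.Adj v b := by
        have := Finset.mem_of_mem_erase hb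
        simpa [hN] using this
      rw [heu, Finset.sum_empty, hsingle, Finset.sum_singleton] at hSuSv
      exact (hwpos _ (hmemE hbadj)).ne' hSuSv.symm
    · have hsingle : (N u).erase v = {a} :=
        Finset.eq_singleton_iff_unique_mem.2
          ⟨ha, fun z hz => Finset.card_le_one.1 hcu z hz a ha⟩
      have haadj : G.Adj u a := by
        have := Finset.mem_of_mem_erase ha
        simpa [hN] using this
      rw [hev, Finset.sum_empty, hsingle, Finset.sum_singleton] at hSuSv
      exact (hwpos _ (hmemE haadj)).ne' hSuSv
    · have hsu : (N u).erase v = {a} :=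
        Finset.eq_singleton_iff_unique_mem.2
          ⟨ha, fun z hz => Finset.card_le_one.1 hcu z hz a ha⟩
      have hsv : (N v).erase u = {b} :=
        Finset.eq_singleton_iff_unique_mem.2
          ⟨hb, fun z hz => Finset.card_le_one.1 hcv z hz b hb⟩
      have haadj : G.Adj u a := by
        have := Finset.mem_of_mem_erase ha
        simpa [hN] using this
      have hbadj : G.Adj v b := by
        have := Finset.mem_of_mem_erase hb
        simpa [hN] using this
      rw [hsu, hsv, Finset.sum_singleton, Finset.sum_singleton] at hSuSv
      have hedge : s(u, a) = s(v, b) :=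
        winj _ (hmemE haadj) _ (hmemE hbadj) hSuSv
      rcases Sym2.eq_iff.1 hedge with ⟨h1', h2'⟩ | ⟨h1', h2'⟩
      · exact huvne h1'
      · exact (Finset.ne_of_mem_erase ha) h2'
  refine ⟨w, hbij, ?_⟩
  intro u v huv
  by_cases hu : u = r
  · subst hu
    exact (claim1 v huv).ne'
  by_cases hv : v = r
  · subst hv
    exact (claim1 u huv.symm).ne
  exact claim2 u v huv hu hv
end
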